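/- arXiv:2204.02432 — 9 statements merged into one kernel-verified Lean document; each statement's English description precedes it below -/
import Mathlib

section
/- Outcome-regression decomposition (identification of μ_a*, section 2.2): under Assumptions NI and POS, M = Γ·M_R + (1−Γ)·M_S = μ almost everywhere on {π > 0}; consequently, if π > 0 almost surely, the identified functional τ_a(P) := E[μ] equals the g-formula functional E[M] = E_P[E(Y | L, A = a)]. -/
/-!
On the fiber `{A = a, R = 0}` every `σ(L, A, R)`-measurable function agrees with a
`σ(L)`-measurable one (Doob–Dynkin), so conditioning on `L` factors through the fiber
probability `p = P(A = a, R = 0 | L) = (1 - Γ) π`: `E[1_fiber X | L] = φ_X p`, where `φ_X` is the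
fiber version of `E[X | L, A, R]`. For `X = S, Y, S Y`, NI gives `φ_{SY} = φ_S φ_Y`, so the
nuisance equations read `H p = φ_S p` and `M_S H p = φ_S φ_Y p`. POS forces `φ_S ≥ ε` wherever
`p ≠ 0`, hence `M_S p = φ_Y p = E[1_fiber Y | L]`, and splitting `1{A = a} Y` along `R` gives
`M π = M_R Γ π + M_S (1 - Γ) π`.
-/

open MeasureTheory

namespace MeasureTheory

variable {Ω β γ Z : Type*} {m mΩ : MeasurableSpace Ω} {P : Measure Ω}

lemma StronglyMeasurable.exists_comap_eq_on_fiber [mβ : MeasurableSpace β]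
    [mγ : MeasurableSpace γ] [TopologicalSpace Z] [TopologicalSpace.IsCompletelyMetrizableSpace Z]
    [Nonempty Z] {L : Ω → β} {V : Ω → γ} {g : Ω → Z}
    (hg : StronglyMeasurable[(mβ.prod mγ).comap fun ω => (L ω, V ω)] g) (c : γ) :
    ∃ g' : Ω → Z, StronglyMeasurable[mβ.comap L] g' ∧ ∀ ω, V ω = c → g ω = g' ω := by
  obtain ⟨G, hG, rfl⟩ := hg.exists_eq_measurable_comp
  refine ⟨fun ω => G (L ω, c), ?_, fun ω hω => by simp [hω]⟩
  exact (hG.comp_measurable measurable_prodMk_right).comp_measurable (comap_measurable L)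

section Arm

variable {α : Type*} [DecidableEq α] {A : Ω → α} {R : Ω → ℝ}

lemma ite_mul_eq_indicator_fiber {a : α} {f : Ω → ℝ} (hf : ∀ ω, f ω * R ω = 0) :
    (fun ω => (if A ω = a then (1 : ℝ) else 0) * f ω)
      = ((fun ω => (A ω, R ω)) ⁻¹' {(a, 0)}).indicator f := by
  ext ω
  by_cases hA : A ω = a
  · by_cases hR : R ω = 0
    · simp [hA, hR]
    · simp [hA, hR, (mul_eq_zero.mp (hf ω)).resolve_right hR]
  · simp [hA]

lemma ite_mul_one_sub_eq_indicator_fiber (hR01 : ∀ ω, R ω = 0 ∨ R ω = 1) (a : α) :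
    (fun ω => (if A ω = a then (1 : ℝ) else 0) * (1 - R ω))
      = ((fun ω => (A ω, R ω)) ⁻¹' {(a, 0)}).indicator 1 := by
  ext ω
  by_cases hA : A ω = a <;> rcases hR01 ω with h | h <;> simp [hA, h]

lemma Integrable.zero_or_one_mul {u f : Ω → ℝ} (hf : Integrable f P) (hu : Measurable u)
    (hu01 : ∀ ω, u ω = 0 ∨ u ω = 1) : Integrable (fun ω => u ω * f ω) P :=
  hf.bdd_mul hu.aestronglyMeasurable (c := 1) <| ae_of_all _ fun ω => by
    rcases hu01 ω with h | h <;> simp [h]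

variable [MeasurableSpace α] [MeasurableSingletonClass α]

lemma integrable_ite_mul (hA : Measurable A) (a : α) {f : Ω → ℝ} (hf : Integrable f P) :
    Integrable (fun ω => (if A ω = a then (1 : ℝ) else 0) * f ω) P := by
  refine (hf.indicator (hA (measurableSet_singleton a))).congr (ae_of_all _ fun ω => ?_)
  by_cases h : A ω = a <;> simp [h]

lemma condExp_ite_mul_eq_add (hA : Measurable A) (hR : Measurable R)
    (hR01 : ∀ ω, R ω = 0 ∨ R ω = 1) (a : α) {Y : Ω → ℝ} (hY : Integrable Y P) :
    P[fun ω => (if A ω = a then (1 : ℝ) else 0) * Y ω | m]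
      =ᵐ[P] P[fun ω => (if A ω = a then (1 : ℝ) else 0) * R ω * Y ω | m]
        + P[((fun ω => (A ω, R ω)) ⁻¹' {(a, 0)}).indicator Y | m] := by
  have hRY := integrable_ite_mul hA a (hY.zero_or_one_mul hR hR01)
  simp_rw [← mul_assoc] at hRY
  convert condExp_add hRY (hY.indicator ((hA.prodMk hR) (measurableSet_singleton (a, 0)))) m
    using 2
  ext ω
  by_cases hA : A ω = a <;> rcases hR01 ω with h | h <;> simp [hA, h]

variable [IsFiniteMeasure P]

lemma integrable_of_zero_or_one {u : Ω → ℝ} (hu : Measurable u)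
    (hu01 : ∀ ω, u ω = 0 ∨ u ω = 1) : Integrable u P := by
  simpa using (integrable_const (1 : ℝ)).zero_or_one_mul hu hu01

lemma condExp_indicator_fiber_one_eq_sub (hA : Measurable A) (hR : Measurable R)
    (hR01 : ∀ ω, R ω = 0 ∨ R ω = 1) (a : α) :
    P[((fun ω => (A ω, R ω)) ⁻¹' {(a, 0)}).indicator 1 | m]
      =ᵐ[P] P[fun ω => if A ω = a then (1 : ℝ) else 0 | m]
        - P[fun ω => (if A ω = a then (1 : ℝ) else 0) * R ω | m] := by
  rw [← ite_mul_one_sub_eq_indicator_fiber hR01, show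
    (fun ω => (if A ω = a then (1 : ℝ) else 0) * (1 - R ω)) = (fun ω => if A ω = a then 1 else 0)
      - fun ω => (if A ω = a then (1 : ℝ) else 0) * R ω by ext ω; simp only [Pi.sub_apply]; ring]
  exact condExp_sub (by simpa using integrable_ite_mul hA a (integrable_const (1 : ℝ)))
    (integrable_ite_mul hA a (integrable_of_zero_or_one hR hR01)) m

end Arm

variable [IsFiniteMeasure P]

lemma condExp_indicator_condExp {E : Type*} [NormedAddCommGroup E] [NormedSpace ℝ E]
    [CompleteSpace E] {m' : MeasurableSpace Ω} (hmm' : m ≤ m') (hm' : m' ≤ mΩ)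
    {s : Set Ω} (hs : MeasurableSet[m'] s) {f : Ω → E} (hf : Integrable f P) :
    P[s.indicator (P[f | m']) | m] =ᵐ[P] P[s.indicator f | m] :=
  (condExp_congr_ae (condExp_indicator hf hs)).symm.trans (condExp_condExp_of_le hmm' hm')

lemma condExp_indicator_eq_mul_of_ae_eq_on {s : Set Ω} (hs : MeasurableSet s) {f φ : Ω → ℝ}
    (hf : Integrable f P) (hφ : StronglyMeasurable[m] φ) (hfφ : ∀ᵐ ω ∂P, ω ∈ s → f ω = φ ω) :
    P[s.indicator f | m] =ᵐ[P] φ * P[s.indicator (1 : Ω → ℝ) | m] := by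
  have hfs : s.indicator f =ᵐ[P] φ * s.indicator 1 := by
    filter_upwards [hfφ] with ω h
    by_cases hω : ω ∈ s <;> simp [hω, h]
  refine (condExp_congr_ae hfs).trans (condExp_mul_of_stronglyMeasurable_left hφ ?_ ?_)
  · exact (hf.indicator hs).congr hfs
  · exact (integrable_const 1).indicator hs

lemma ae_condExp_indicator_one_eq_zero {s t : Set Ω} (hs : MeasurableSet s)
    (ht : MeasurableSet[m] t) (hst : ∀ᵐ ω ∂P, ω ∈ s → ω ∉ t) :
    ∀ᵐ ω ∂P, ω ∈ t → P[s.indicator (1 : Ω → ℝ) | m] ω = 0 := by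
  have hts : t.indicator (s.indicator (1 : Ω → ℝ)) =ᵐ[P] 0 := by
    filter_upwards [hst] with ω h
    by_cases hω : ω ∈ s <;> simp_all
  have hzero := (condExp_indicator ((integrable_const 1).indicator hs) ht).symm.trans
    ((condExp_congr_ae hts).trans condExp_zero.eventuallyEq)
  filter_upwards [hzero] with ω h hω
  simpa [hω] using h

section Fiber

variable [mβ : MeasurableSpace β] [mγ : MeasurableSpace γ] [MeasurableSingletonClass γ]
  {L : Ω → β} {V : Ω → γ}

lemma condExp_indicator_fiber_eq_mul (hL : Measurable L) (hV : Measurable V) (c : γ)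
    {X φ : Ω → ℝ} (hX : Integrable X P) (hφ : StronglyMeasurable[mβ.comap L] φ)
    (hXφ : ∀ᵐ ω ∂P, V ω = c → P[X | (mβ.prod mγ).comap fun ω => (L ω, V ω)] ω = φ ω) :
    P[(V ⁻¹' {c}).indicator X | mβ.comap L] =ᵐ[P]
      φ * P[(V ⁻¹' {c}).indicator (1 : Ω → ℝ) | mβ.comap L] := by
  have hL' : Measurable[(mβ.prod mγ).comap fun ω => (L ω, V ω)] L :=
    measurable_fst.comp (comap_measurable _)
  have hfiber : MeasurableSet[(mβ.prod mγ).comap fun ω => (L ω, V ω)] (V ⁻¹' {c}) :=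
    ⟨Set.univ ×ˢ {c}, MeasurableSet.univ.prod (measurableSet_singleton c), by ext; simp⟩
  exact (condExp_indicator_condExp hL'.comap_le (hL.prodMk hV).comap_le hfiber hX).symm.trans
    (condExp_indicator_eq_mul_of_ae_eq_on (hV (measurableSet_singleton c)) integrable_condExp
      hφ hXφ)

theorem condExp_indicator_fiber_eq_of_doubleSampling (hL : Measurable L) (hV : Measurable V)
    (c : γ) {S Y H M : Ω → ℝ} (hS : Integrable S P) (hY : Integrable Y P)
    (hSY : Integrable (fun ω => S ω * Y ω) P)
    (hNI : ∀ᵐ ω ∂P, V ω = c → P[fun ω => S ω * Y ω | (mβ.prod mγ).comap fun ω => (L ω, V ω)] ω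
      = P[S | (mβ.prod mγ).comap fun ω => (L ω, V ω)] ω
        * P[Y | (mβ.prod mγ).comap fun ω => (L ω, V ω)] ω)
    {ε : ℝ} (hε : 0 < ε)
    (hPOS : ∀ᵐ ω ∂P, V ω = c → ε ≤ P[S | (mβ.prod mγ).comap fun ω => (L ω, V ω)] ω)
    (hH : P[(V ⁻¹' {c}).indicator S | mβ.comap L]
      =ᵐ[P] H * P[(V ⁻¹' {c}).indicator (1 : Ω → ℝ) | mβ.comap L])
    (hM : P[(V ⁻¹' {c}).indicator (fun ω => S ω * Y ω) | mβ.comap L]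
      =ᵐ[P] M * (H * P[(V ⁻¹' {c}).indicator (1 : Ω → ℝ) | mβ.comap L])) :
    P[(V ⁻¹' {c}).indicator Y | mβ.comap L]
      =ᵐ[P] M * P[(V ⁻¹' {c}).indicator (1 : Ω → ℝ) | mβ.comap L] := by
  obtain ⟨g, hg, hgS⟩ := (stronglyMeasurable_condExp (f := S) (μ := P)
    (m := (mβ.prod mγ).comap fun ω => (L ω, V ω))).exists_comap_eq_on_fiber c
  obtain ⟨h, hh, hhY⟩ := (stronglyMeasurable_condExp (f := Y) (μ := P)
    (m := (mβ.prod mγ).comap fun ω => (L ω, V ω))).exists_comap_eq_on_fiber c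
  have hSp := condExp_indicator_fiber_eq_mul hL hV c hS hg (ae_of_all _ hgS)
  have hYp := condExp_indicator_fiber_eq_mul hL hV c hY hh (ae_of_all _ hhY)
  have hSYp := condExp_indicator_fiber_eq_mul hL hV c hSY (hg.mul hh) <| by
    filter_upwards [hNI] with ω hω hc
    rw [hω hc, hgS ω hc, hhY ω hc, Pi.mul_apply]
  set p := P[(V ⁻¹' {c}).indicator (1 : Ω → ℝ) | mβ.comap L]
  -- `{g < ε}` is `σ(L)`-measurable and, by POS, misses the fiber up to a null set
  have hgε : ∀ᵐ ω ∂P, p ω ≠ 0 → ε ≤ g ω := by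
    have hzero := ae_condExp_indicator_one_eq_zero (hV (measurableSet_singleton c))
      (hg.measurable measurableSet_Iio) (t := {ω | g ω < ε}) <| by
        filter_upwards [hPOS] with ω hω hc
        simpa [← hgS ω hc] using hω hc
    filter_upwards [hzero] with ω hω hp
    exact not_lt.mp fun hlt => hp (hω hlt)
  filter_upwards [hH, hM, hSp, hYp, hSYp, hgε] with ω eH eM eS eY eSY hε'
  simp only [Pi.mul_apply] at eH eM eS eY eSY ⊢
  rw [eY]
  by_cases hp : p ω = 0
  · rw [hp, mul_zero, mul_zero]
  have hHg : H ω = g ω := mul_right_cancel₀ hp (eH.symm.trans eS)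
  have hg0 : g ω ≠ 0 := (hε.trans_le (hε' hp)).ne'
  have : M ω * (g ω * p ω) = h ω * (g ω * p ω) := by rw [← hHg, ← eM, eSY, hHg]; ring
  rw [mul_right_cancel₀ (mul_ne_zero hg0 hp) this]

end Fiber

end MeasureTheory

/-- Outcome-regression decomposition (section 2.2): under Assumptions NI and POS,
`μ = Γ·M_R + (1−Γ)·M_S = M` a.e. on `{π > 0}`; consequently, if `π > 0` a.s.,
the identified functional `τ_a(P) = E[μ]` equals the g-formula functional `E[M]`. -/
theorem outcome_regression_decomposition
    {Ω : Type*} [MeasurableSpace Ω] (P : Measure Ω) [IsProbabilityMeasure P]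
    {d : ℕ} (L : Ω → (Fin d → ℝ)) (A R S Y : Ω → ℝ)
    (hL : Measurable L) (hA : Measurable A) (hR : Measurable R)
    (hS : Measurable S) (hY : Integrable Y P)
    (hA01 : ∀ ω, A ω = 0 ∨ A ω = 1)
    (hR01 : ∀ ω, R ω = 0 ∨ R ω = 1)
    (hS01 : ∀ ω, S ω = 0 ∨ S ω = 1)
    (hSR : ∀ ω, S ω * R ω = 0)
    (a : ℝ) (ha : a = 0 ∨ a = 1)
    (𝓛 : MeasurableSpace Ω) (h𝓛 : 𝓛 = MeasurableSpace.comap L inferInstance)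
    (𝓖R : MeasurableSpace Ω)
    (h𝓖R : 𝓖R = MeasurableSpace.comap (fun ω => (L ω, A ω, R ω)) inferInstance)
    (ind : Ω → ℝ) (hind : ind = fun ω => if A ω = a then (1:ℝ) else 0)
    -- arm-a nuisance random variables
    (π Γ H M M_R M_S : Ω → ℝ)
    (hπ_meas : Measurable[𝓛] π) (hπ_int : Integrable π P)
    (hΓ_meas : Measurable[𝓛] Γ) (hΓ_int : Integrable Γ P)
    (hH_meas : Measurable[𝓛] H) (hH_int : Integrable H P)
    (hM_meas : Measurable[𝓛] M) (hM_int : Integrable M P)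
    (hMR_meas : Measurable[𝓛] M_R) (hMR_int : Integrable M_R P)
    (hMS_meas : Measurable[𝓛] M_S) (hMS_int : Integrable M_S P)
    (hπ01 : ∀ ω, 0 ≤ π ω ∧ π ω ≤ 1)
    (hΓ01 : ∀ ω, 0 ≤ Γ ω ∧ Γ ω ≤ 1)
    (hH01 : ∀ ω, 0 ≤ H ω ∧ H ω ≤ 1)
    -- characterizations
    (hπ : P[ind | 𝓛] =ᵐ[P] π)
    (hΓ : P[fun ω => ind ω * R ω | 𝓛] =ᵐ[P] fun ω => Γ ω * π ω)
    (hH : P[fun ω => ind ω * S ω | 𝓛]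
      =ᵐ[P] fun ω => H ω * (P[fun ω' => ind ω' * (1 - R ω') | 𝓛]) ω)
    (hM : P[fun ω => ind ω * Y ω | 𝓛] =ᵐ[P] fun ω => M ω * π ω)
    (hMR : P[fun ω => ind ω * R ω * Y ω | 𝓛] =ᵐ[P] fun ω => M_R ω * (Γ ω * π ω))
    (hMS : P[fun ω => ind ω * S ω * Y ω | 𝓛]
      =ᵐ[P] fun ω => M_S ω * (H ω * ((1 - Γ ω) * π ω)))
    -- Assumption NI
    (hNI : ∀ f : ℝ → ℝ, Measurable f → (∃ B, ∀ x, |f x| ≤ B) →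
      ∀ᵐ ω ∂P, R ω = 0 →
        (P[fun ω' => S ω' * f (Y ω') | 𝓖R]) ω
          = (P[S | 𝓖R]) ω * (P[fun ω' => f (Y ω') | 𝓖R]) ω)
    (hNIid : ∀ᵐ ω ∂P, R ω = 0 →
      (P[fun ω' => S ω' * Y ω' | 𝓖R]) ω = (P[S | 𝓖R]) ω * (P[Y | 𝓖R]) ω)
    -- Assumption POS
    (ε : ℝ) (hε : 0 < ε)
    (hPOS : ∀ᵐ ω ∂P, R ω = 0 → ε ≤ (P[S | 𝓖R]) ω) :
    (∀ᵐ ω ∂P, 0 < π ω → Γ ω * M_R ω + (1 - Γ ω) * M_S ω = M ω)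
    ∧ ((∀ᵐ ω ∂P, 0 < π ω) →
        ∫ ω, (Γ ω * M_R ω + (1 - Γ ω) * M_S ω) ∂P = ∫ ω, M ω ∂P) := by
  subst h𝓛 h𝓖R hind
  beta_reduce at hΓ hH hM hMR hMS
  set s : Set Ω := (fun ω => (A ω, R ω)) ⁻¹' {(a, 0)}
  have hp : P[s.indicator 1 | MeasurableSpace.comap L inferInstance]
      =ᵐ[P] fun ω => (1 - Γ ω) * π ω := by
    filter_upwards [condExp_indicator_fiber_one_eq_sub hA hR hR01 a, hπ, hΓ] with ω h h1 h2
    rw [h, Pi.sub_apply, h1, h2]; ring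
  rw [ite_mul_eq_indicator_fiber hSR, ite_mul_one_sub_eq_indicator_fiber hR01] at hH
  simp_rw [mul_assoc] at hMS
  rw [ite_mul_eq_indicator_fiber (R := R) (f := fun ω => S ω * Y ω) fun ω => by
    linear_combination Y ω * hSR ω] at hMS
  have hYs := condExp_indicator_fiber_eq_of_doubleSampling hL (hA.prodMk hR) (a, 0)
    (integrable_of_zero_or_one hS hS01) hY (hY.zero_or_one_mul hS hS01)
    (hNIid.mono fun ω h hω => h (Prod.ext_iff.mp hω).2) hε
    (hPOS.mono fun ω h hω => h (Prod.ext_iff.mp hω).2) hH <| by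
      filter_upwards [hMS, hp] with ω h1 h2
      rw [h1, Pi.mul_apply, Pi.mul_apply, h2]
  have hpt : ∀ᵐ ω ∂P, 0 < π ω → Γ ω * M_R ω + (1 - Γ ω) * M_S ω = M ω := by
    filter_upwards [hM, hMR, hYs, hp, condExp_ite_mul_eq_add hA hR hR01 a hY]
      with ω eM eMR eY ep e hπ
    refine mul_right_cancel₀ hπ.ne' ?_
    rw [← eM, e, Pi.add_apply, eMR, eY, Pi.mul_apply, ep]; ring
  exact ⟨hpt, fun hπ => integral_congr_ae <| by filter_upwards [hpt, hπ] with ω h hπ using h hπ⟩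
end

section
/- Inverse-probability-weighting identity for τ_a: if π ≥ ε and H ≥ ε almost surely for some ε > 0, then E[(1{A=a}/π)·(R + S/H)·Y] = E[μ] = τ_a(P). -/
open MeasureTheory

/-! Conditioning on `L` turns the two weighted terms into
`π⁻¹ · E[1{A=a} R Y | L] = Γ M_R` and `(π H)⁻¹ · E[1{A=a} S Y | L] = (1 - Γ) M_S`, because the
weights are `L`-measurable and bounded, so they pull out of the conditional expectation. The tower
property then identifies the two expectations. -/

theorem mul_eq_zero_or_eq_one {M₀ : Type*} [MulZeroOneClass M₀] {x y : M₀}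
    (hx : x = 0 ∨ x = 1) (hy : y = 0 ∨ y = 1) : x * y = 0 ∨ x * y = 1 := by
  rcases hx with rfl | rfl <;> simp [hy]

namespace MeasureTheory

variable {Ω : Type*} {m m₀ : MeasurableSpace Ω} {P : Measure Ω}

theorem measurable_ite_eq_one_zero {A : Ω → ℝ} (hA : Measurable[m₀] A) (a : ℝ) :
    Measurable[m₀] fun ω => if A ω = a then (1 : ℝ) else 0 :=
  Measurable.ite (hA (measurableSet_singleton a)) measurable_const measurable_const

theorem Integrable.mul_of_forall_eq_zero_or_eq_one {b Y : Ω → ℝ} (hY : Integrable Y P)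
    (hb : Measurable b) (hb01 : ∀ ω, b ω = 0 ∨ b ω = 1) :
    Integrable (fun ω => b ω * Y ω) P :=
  hY.bdd_mul hb.aestronglyMeasurable (c := 1) <| .of_forall fun ω => by
    rcases hb01 ω with h | h <;> simp [h]

theorem Integrable.inv_mul_of_le {w g : Ω → ℝ} {c : ℝ} (hg : Integrable g P)
    (hw : AEStronglyMeasurable w P) (hc : 0 < c) (hw_ge : ∀ᵐ ω ∂P, c ≤ w ω) :
    Integrable (fun ω => (w ω)⁻¹ * g ω) P := by
  refine hg.bdd_mul (c := c⁻¹) ?_ ?_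
  · exact (hw.aemeasurable.inv).aestronglyMeasurable
  · filter_upwards [hw_ge] with ω hω
    rw [norm_inv, Real.norm_of_nonneg (hc.le.trans hω)]
    exact inv_anti₀ hc hω

theorem condExp_inv_mul_ae_eq_of_condExp_ae_eq_mul {w g h : Ω → ℝ} (hw : Measurable[m] w)
    (hw0 : ∀ᵐ ω ∂P, w ω ≠ 0) (hg : Integrable g P)
    (hwg : Integrable (fun ω => (w ω)⁻¹ * g ω) P)
    (hcond : P[g | m] =ᵐ[P] fun ω => h ω * w ω) :
    P[fun ω => (w ω)⁻¹ * g ω | m] =ᵐ[P] h := by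
  have hpull : P[fun ω => (w ω)⁻¹ * g ω | m] =ᵐ[P] fun ω => (w ω)⁻¹ * P[g | m] ω :=
    condExp_mul_of_stronglyMeasurable_left hw.inv.stronglyMeasurable hwg hg
  filter_upwards [hpull, hcond, hw0] with ω hpullω hcondω hwω
  rw [hpullω, hcondω]
  field_simp

end MeasureTheory

/-- Inverse-probability-weighting identity for `τ_a`: if `π ≥ ε` and `H ≥ ε` a.s.
for some `ε > 0`, then `E[(1{A=a}/π)·(R + S/H)·Y] = E[μ] = τ_a(P)`,
where `μ = Γ·M_R + (1−Γ)·M_S`. -/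
theorem ipw_identity_tau
    {Ω : Type*} [MeasurableSpace Ω] (P : Measure Ω) [IsProbabilityMeasure P]
    {d : ℕ} (L : Ω → (Fin d → ℝ)) (A R S Y : Ω → ℝ)
    (hL : Measurable L) (hA : Measurable A) (hR : Measurable R)
    (hS : Measurable S) (hY : Integrable Y P)
    (hA01 : ∀ ω, A ω = 0 ∨ A ω = 1)
    (hR01 : ∀ ω, R ω = 0 ∨ R ω = 1)
    (hS01 : ∀ ω, S ω = 0 ∨ S ω = 1)
    (hSR : ∀ ω, S ω * R ω = 0)
    (a : ℝ) (ha : a = 0 ∨ a = 1)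
    (𝓛 : MeasurableSpace Ω) (h𝓛 : 𝓛 = MeasurableSpace.comap L inferInstance)
    (ind : Ω → ℝ) (hind : ind = fun ω => if A ω = a then (1:ℝ) else 0)
    -- arm-a nuisance random variables
    (π Γ H M_R M_S : Ω → ℝ)
    (hπ_meas : Measurable[𝓛] π) (hπ_int : Integrable π P)
    (hΓ_meas : Measurable[𝓛] Γ) (hΓ_int : Integrable Γ P)
    (hH_meas : Measurable[𝓛] H) (hH_int : Integrable H P)
    (hMR_meas : Measurable[𝓛] M_R) (hMR_int : Integrable M_R P)
    (hMS_meas : Measurable[𝓛] M_S) (hMS_int : Integrable M_S P)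
    (hπ01 : ∀ ω, 0 ≤ π ω ∧ π ω ≤ 1)
    (hΓ01 : ∀ ω, 0 ≤ Γ ω ∧ Γ ω ≤ 1)
    (hH01 : ∀ ω, 0 ≤ H ω ∧ H ω ≤ 1)
    -- characterizations
    (hπ : P[ind | 𝓛] =ᵐ[P] π)
    (hΓ : P[fun ω => ind ω * R ω | 𝓛] =ᵐ[P] fun ω => Γ ω * π ω)
    (hH : P[fun ω => ind ω * S ω | 𝓛]
      =ᵐ[P] fun ω => H ω * (P[fun ω' => ind ω' * (1 - R ω') | 𝓛]) ω)
    (hMR : P[fun ω => ind ω * R ω * Y ω | 𝓛] =ᵐ[P] fun ω => M_R ω * (Γ ω * π ω))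
    (hMS : P[fun ω => ind ω * S ω * Y ω | 𝓛]
      =ᵐ[P] fun ω => M_S ω * (H ω * ((1 - Γ ω) * π ω)))
    -- positivity
    (ε : ℝ) (hε : 0 < ε)
    (hπpos : ∀ᵐ ω ∂P, ε ≤ π ω)
    (hHpos : ∀ᵐ ω ∂P, ε ≤ H ω) :
    ∫ ω, (ind ω / π ω) * (R ω + S ω / H ω) * Y ω ∂P
      = ∫ ω, (Γ ω * M_R ω + (1 - Γ ω) * M_S ω) ∂P := by
  -- Types are inferred: with `𝓛` a local instance, `Measurable f` would mean `Measurable[𝓛] f`.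
  have hm := h𝓛.symm ▸ hL.comap_le
  have hind_meas := hind ▸ measurable_ite_eq_one_zero hA a
  have hind01 : ∀ ω, ind ω = 0 ∨ ind ω = 1 := fun ω => by
    rw [hind]; exact (ite_eq_or_eq ..).symm
  have hεε := mul_pos hε hε
  have hπH : ∀ᵐ ω ∂P, ε * ε ≤ π ω * H ω := by
    filter_upwards [hπpos, hHpos] with ω hπω hHω
    exact mul_le_mul hπω hHω hε.le (hε.le.trans hπω)
  have hRY : Integrable (fun ω => ind ω * R ω * Y ω) P :=
    hY.mul_of_forall_eq_zero_or_eq_one (hind_meas.mul hR) fun ω =>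
      mul_eq_zero_or_eq_one (hind01 ω) (hR01 ω)
  have hSY : Integrable (fun ω => ind ω * S ω * Y ω) P :=
    hY.mul_of_forall_eq_zero_or_eq_one (hind_meas.mul hS) fun ω =>
      mul_eq_zero_or_eq_one (hind01 ω) (hS01 ω)
  have hπ_aesm := (hπ_meas.mono hm le_rfl).aestronglyMeasurable (μ := P)
  have hπH_aesm := ((hπ_meas.mul hH_meas).mono hm le_rfl).aestronglyMeasurable (μ := P)
  have hR_ipw := hRY.inv_mul_of_le hπ_aesm hε hπpos
  have hS_ipw := hSY.inv_mul_of_le hπH_aesm hεε hπH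
  have hR_term := condExp_inv_mul_ae_eq_of_condExp_ae_eq_mul (h := fun ω => Γ ω * M_R ω)
    hπ_meas (hπpos.mono fun ω h => (hε.trans_le h).ne') hRY hR_ipw
    (hMR.trans (.of_forall fun ω => by ring))
  have hS_term := condExp_inv_mul_ae_eq_of_condExp_ae_eq_mul
    (w := fun ω => π ω * H ω) (h := fun ω => (1 - Γ ω) * M_S ω) (hπ_meas.mul hH_meas)
    (hπH.mono fun ω h => (hεε.trans_le h).ne') hSY hS_ipw
    (hMS.trans (.of_forall fun ω => by ring))
  calc ∫ ω, (ind ω / π ω) * (R ω + S ω / H ω) * Y ω ∂P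
      = ∫ ω, ((π ω)⁻¹ * (ind ω * R ω * Y ω) + (π ω * H ω)⁻¹ * (ind ω * S ω * Y ω)) ∂P := by
        congr 1; funext ω; rw [mul_inv]; ring
    _ = ∫ ω, P[fun ω => (π ω)⁻¹ * (ind ω * R ω * Y ω)
          + (π ω * H ω)⁻¹ * (ind ω * S ω * Y ω) | 𝓛] ω ∂P := (integral_condExp hm).symm
    _ = ∫ ω, (Γ ω * M_R ω + (1 - Γ ω) * M_S ω) ∂P := integral_congr_ae <|
        (condExp_add hR_ipw hS_ipw 𝓛).trans (hR_term.add hS_term)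
end

section
/- Mean-zero property of the nonparametric influence function (Theorem 1, first part): if π ≥ ε and H ≥ ε almost surely for some ε > 0, and M_S and μ are integrable, then E[ μ + (1{A=a}/π)·{ (R + S/H)·Y − μ + (1−R)·(1 − S/H)·M_S } ] = E[μ]; equivalently E[(1{A=a}/π)·{(R + S/H)·Y − μ + (1−R)·(1 − S/H)·M_S}] = 0, so the paper's influence function τ̇_a(O;P) = μ_a(L) − τ_a(P) + (1(A=a)/π_a(L))·{(R + S/η_{a,0}(L))·Y − μ_a(L) + (1−R)(1 − S/η_{a,0}(L))·μ_{a,S}(L)} has P-mean zero. -/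
/-!
Using `S·R = 0`, the centred term splits as `π⁻¹·X₁ + (π·H)⁻¹·X₂` with
`X₁ = 1{A=a}·(R·Y − μ + (1 − R)·M_S)` and `X₂ = 1{A=a}·S·(Y − M_S)`.
Both residuals have conditional mean zero given `L`: the characterizations give
`E[X₁ | L] = π·(Γ·M_R − μ + (1 − Γ)·M_S) = 0` and
`E[X₂ | L] = M_S·H·(1 − Γ)·π − M_S·H·E[1{A=a}·(1 − R) | L] = 0`.
The weights `π⁻¹` and `(π·H)⁻¹` are `L`-measurable and, as `π, H ≥ ε`, bounded; pulling
them out of the conditional expectation shows that both weighted residuals have mean zero.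
-/

open MeasureTheory

theorem unitInterval.mem_of_eq_zero_or_eq_one {x : ℝ} (hx : x = 0 ∨ x = 1) :
    x ∈ unitInterval :=
  hx.elim (fun h => h ▸ unitInterval.zero_mem) (fun h => h ▸ unitInterval.one_mem)

theorem unitInterval.norm_le_one {x : ℝ} (hx : x ∈ unitInterval) : ‖x‖ ≤ 1 := by
  rw [Real.norm_of_nonneg hx.1]
  exact hx.2

theorem influence_term_eq_add {t r s y p h μ m : ℝ} (hsr : s * r = 0) :
    t / p * ((r + s / h) * y - μ + (1 - r) * (1 - s / h) * m) =
      p⁻¹ * (t * (r * y - μ + (1 - r) * m)) + (p * h)⁻¹ * (t * s * (y - m)) := by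
  simp only [div_eq_mul_inv, mul_inv]
  linear_combination (t * p⁻¹ * m * h⁻¹) * hsr

namespace MeasureTheory

variable {Ω : Type*} {m m0 : MeasurableSpace Ω} {P : Measure Ω}

theorem Integrable.of_mem_unitInterval [IsFiniteMeasure P] {b : Ω → ℝ}
    (hb : AEStronglyMeasurable b P) (hb_mem : ∀ ω, b ω ∈ unitInterval) : Integrable b P :=
  .of_bound hb 1 (ae_of_all _ fun ω => unitInterval.norm_le_one (hb_mem ω))

theorem Integrable.unitInterval_mul {b X : Ω → ℝ} (hX : Integrable X P)
    (hb : AEStronglyMeasurable b P) (hb_mem : ∀ ω, b ω ∈ unitInterval) :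
    Integrable (fun ω => b ω * X ω) P :=
  hX.bdd_mul hb (ae_of_all _ fun ω => unitInterval.norm_le_one (hb_mem ω))

theorem Integrable.inv_mul_of_le_s3 {w X : Ω → ℝ} {ε : ℝ} (hX : Integrable X P)
    (hw : AEMeasurable w P) (hε : 0 < ε) (hwε : ∀ᵐ ω ∂P, ε ≤ w ω) :
    Integrable (fun ω => (w ω)⁻¹ * X ω) P :=
  hX.bdd_mul hw.inv.aestronglyMeasurable <| hwε.mono fun ω h => by
    rw [norm_inv, Real.norm_of_nonneg (hε.le.trans h)]
    exact inv_anti₀ hε h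

theorem integral_mul_eq_zero_of_condExp_eq_zero (hm : m ≤ m0) [SigmaFinite (P.trim hm)]
    {g X : Ω → ℝ} (hg : StronglyMeasurable[m] g) (hgX : Integrable (fun ω => g ω * X ω) P)
    (hX : Integrable X P) (hX0 : P[X|m] =ᵐ[P] 0) : ∫ ω, g ω * X ω ∂P = 0 := by
  rw [← integral_condExp hm]
  refine integral_eq_zero_of_ae ?_
  filter_upwards [condExp_mul_of_stronglyMeasurable_left hg hgX hX, hX0] with ω hpull h0
  exact hpull.trans (by simp [h0])

variable {T R S Y π Γ H μ M_R M_S : Ω → ℝ}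

theorem integrable_mul_imputed_residual (hT : Measurable T) (hR : Measurable R)
    (hT_mem : ∀ ω, T ω ∈ unitInterval) (hR_mem : ∀ ω, R ω ∈ unitInterval)
    (hY : Integrable Y P) (hμ : Integrable μ P) (hMS : Integrable M_S P) :
    Integrable (fun ω => T ω * (R ω * Y ω - μ ω + (1 - R ω) * M_S ω)) P :=
  (((hY.unitInterval_mul hR.aestronglyMeasurable hR_mem).sub hμ).add
    (hMS.unitInterval_mul (measurable_const.sub hR).aestronglyMeasurable
      fun ω => Set.Icc.mem_iff_one_sub_mem.mp (hR_mem ω))).unitInterval_mul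
    hT.aestronglyMeasurable hT_mem

theorem integrable_mul_sampled_residual (hT : Measurable T) (hS : Measurable S)
    (hT_mem : ∀ ω, T ω ∈ unitInterval) (hS_mem : ∀ ω, S ω ∈ unitInterval)
    (hY : Integrable Y P) (hMS : Integrable M_S P) :
    Integrable (fun ω => T ω * S ω * (Y ω - M_S ω)) P :=
  (hY.sub hMS).unitInterval_mul (hT.mul hS).aestronglyMeasurable
    fun ω => unitInterval.mul_mem (hT_mem ω) (hS_mem ω)

variable [IsFiniteMeasure P]

theorem condExp_mul_one_sub_ae_eq (hT : Measurable T) (hR : Measurable R)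
    (hT_mem : ∀ ω, T ω ∈ unitInterval) (hR_mem : ∀ ω, R ω ∈ unitInterval)
    (hπ : P[T|m] =ᵐ[P] π) (hΓ : P[fun ω => T ω * R ω|m] =ᵐ[P] fun ω => Γ ω * π ω) :
    P[fun ω => T ω * (1 - R ω)|m] =ᵐ[P] fun ω => (1 - Γ ω) * π ω := by
  have hsplit : (fun ω => T ω * (1 - R ω)) = T - fun ω => T ω * R ω := by
    ext ω; simp only [Pi.sub_apply]; ring
  have hT_int : Integrable T P := .of_mem_unitInterval hT.aestronglyMeasurable hT_mem
  have hTR_int : Integrable (fun ω => T ω * R ω) P := .of_mem_unitInterval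
    (hT.mul hR).aestronglyMeasurable fun ω => unitInterval.mul_mem (hT_mem ω) (hR_mem ω)
  rw [hsplit]
  filter_upwards [condExp_sub hT_int hTR_int m, hπ, hΓ] with ω hsub h1 h2
  rw [hsub, Pi.sub_apply, h1, h2]
  ring

theorem condExp_mul_imputed_residual_eq_zero (hT : Measurable T) (hR : Measurable R)
    (hT_mem : ∀ ω, T ω ∈ unitInterval) (hR_mem : ∀ ω, R ω ∈ unitInterval)
    (hY : Integrable Y P) (hμm : StronglyMeasurable[m] μ) (hMSm : StronglyMeasurable[m] M_S)
    (hμ : Integrable μ P) (hMS : Integrable M_S P)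
    (hπ : P[T|m] =ᵐ[P] π) (hΓ : P[fun ω => T ω * R ω|m] =ᵐ[P] fun ω => Γ ω * π ω)
    (hMR : P[fun ω => T ω * R ω * Y ω|m] =ᵐ[P] fun ω => M_R ω * (Γ ω * π ω))
    (hμdef : μ = fun ω => Γ ω * M_R ω + (1 - Γ ω) * M_S ω) :
    P[fun ω => T ω * (R ω * Y ω - μ ω + (1 - R ω) * M_S ω)|m] =ᵐ[P] 0 := by
  have hT1R_mem : ∀ ω, T ω * (1 - R ω) ∈ unitInterval := fun ω =>
    unitInterval.mul_mem (hT_mem ω) (Set.Icc.mem_iff_one_sub_mem.mp (hR_mem ω))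
  have hT1R_meas : Measurable fun ω => T ω * (1 - R ω) := hT.mul (measurable_const.sub hR)
  have hT_int : Integrable T P := .of_mem_unitInterval hT.aestronglyMeasurable hT_mem
  have hT1R_int : Integrable (fun ω => T ω * (1 - R ω)) P :=
    .of_mem_unitInterval hT1R_meas.aestronglyMeasurable hT1R_mem
  have hTRY_int : Integrable (fun ω => T ω * R ω * Y ω) P := hY.unitInterval_mul
    (hT.mul hR).aestronglyMeasurable fun ω => unitInterval.mul_mem (hT_mem ω) (hR_mem ω)
  have hTμ_int : Integrable (T * μ) P := hμ.unitInterval_mul hT.aestronglyMeasurable hT_mem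
  have hT1RMS_int : Integrable ((fun ω => T ω * (1 - R ω)) * M_S) P :=
    hMS.unitInterval_mul hT1R_meas.aestronglyMeasurable hT1R_mem
  have hsplit : (fun ω => T ω * (R ω * Y ω - μ ω + (1 - R ω) * M_S ω)) =
      (fun ω => T ω * R ω * Y ω) - T * μ + (fun ω => T ω * (1 - R ω)) * M_S := by
    ext ω; simp only [Pi.add_apply, Pi.sub_apply, Pi.mul_apply]; ring
  rw [hsplit]
  filter_upwards [condExp_add (hTRY_int.sub hTμ_int) hT1RMS_int m,
    condExp_sub hTRY_int hTμ_int m,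
    condExp_mul_of_stronglyMeasurable_right hμm hTμ_int hT_int,
    condExp_mul_of_stronglyMeasurable_right hMSm hT1RMS_int hT1R_int,
    condExp_mul_one_sub_ae_eq hT hR hT_mem hR_mem hπ hΓ, hπ, hMR]
    with ω hadd hsub hμT hMST h1R h1 hRY
  rw [hadd, Pi.add_apply, hsub, Pi.sub_apply, hμT, hMST, Pi.mul_apply, Pi.mul_apply, h1R, h1,
    hRY, hμdef, Pi.zero_apply]
  ring

theorem condExp_mul_sampled_residual_eq_zero (hT : Measurable T) (hR : Measurable R)
    (hS : Measurable S) (hT_mem : ∀ ω, T ω ∈ unitInterval)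
    (hR_mem : ∀ ω, R ω ∈ unitInterval) (hS_mem : ∀ ω, S ω ∈ unitInterval)
    (hY : Integrable Y P) (hMSm : StronglyMeasurable[m] M_S) (hMS : Integrable M_S P)
    (hπ : P[T|m] =ᵐ[P] π) (hΓ : P[fun ω => T ω * R ω|m] =ᵐ[P] fun ω => Γ ω * π ω)
    (hH : P[fun ω => T ω * S ω|m] =ᵐ[P]
      fun ω => H ω * (P[fun ω' => T ω' * (1 - R ω')|m]) ω)
    (hMS_char : P[fun ω => T ω * S ω * Y ω|m] =ᵐ[P]
      fun ω => M_S ω * (H ω * ((1 - Γ ω) * π ω))) :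
    P[fun ω => T ω * S ω * (Y ω - M_S ω)|m] =ᵐ[P] 0 := by
  have hTS_mem : ∀ ω, T ω * S ω ∈ unitInterval := fun ω =>
    unitInterval.mul_mem (hT_mem ω) (hS_mem ω)
  have hTS_meas : AEStronglyMeasurable (fun ω => T ω * S ω) P := (hT.mul hS).aestronglyMeasurable
  have hTS_int : Integrable (fun ω => T ω * S ω) P := .of_mem_unitInterval hTS_meas hTS_mem
  have hTSY_int : Integrable (fun ω => T ω * S ω * Y ω) P :=
    hY.unitInterval_mul hTS_meas hTS_mem
  have hTSMS_int : Integrable ((fun ω => T ω * S ω) * M_S) P :=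
    hMS.unitInterval_mul hTS_meas hTS_mem
  have hsplit : (fun ω => T ω * S ω * (Y ω - M_S ω)) =
      (fun ω => T ω * S ω * Y ω) - (fun ω => T ω * S ω) * M_S := by
    ext ω; simp only [Pi.sub_apply, Pi.mul_apply]; ring
  rw [hsplit]
  filter_upwards [condExp_sub hTSY_int hTSMS_int m,
    condExp_mul_of_stronglyMeasurable_right hMSm hTSMS_int hTS_int, hH,
    condExp_mul_one_sub_ae_eq hT hR hT_mem hR_mem hπ hΓ, hMS_char]
    with ω hsub hMST hS h1R hSY
  rw [hsub, Pi.sub_apply, hMST, Pi.mul_apply, hS, h1R, hSY, Pi.zero_apply]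
  ring

end MeasureTheory
/-- Mean-zero property of the nonparametric influence function (Theorem 1, first part):
if `π ≥ ε` and `H ≥ ε` a.s., then
`E[μ + (1{A=a}/π)·{(R + S/H)·Y − μ + (1−R)(1 − S/H)·M_S}] = E[μ]`; equivalently the
centered influence-function term has `P`-mean zero. -/
theorem nonparametric_IF_mean_zero
    {Ω : Type*} [MeasurableSpace Ω] (P : Measure Ω) [IsProbabilityMeasure P]
    {d : ℕ} (L : Ω → (Fin d → ℝ)) (A R S Y : Ω → ℝ)
    (hL : Measurable L) (hA : Measurable A) (hR : Measurable R)
    (hS : Measurable S) (hY : Integrable Y P)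
    (hA01 : ∀ ω, A ω = 0 ∨ A ω = 1)
    (hR01 : ∀ ω, R ω = 0 ∨ R ω = 1)
    (hS01 : ∀ ω, S ω = 0 ∨ S ω = 1)
    (hSR : ∀ ω, S ω * R ω = 0)
    (a : ℝ) (ha : a = 0 ∨ a = 1)
    (𝓛 : MeasurableSpace Ω) (h𝓛 : 𝓛 = MeasurableSpace.comap L inferInstance)
    (ind : Ω → ℝ) (hind : ind = fun ω => if A ω = a then (1:ℝ) else 0)
    -- arm-a nuisance random variables
    (π Γ H M_R M_S : Ω → ℝ)
    (hπ_meas : Measurable[𝓛] π) (hπ_int : Integrable π P)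
    (hΓ_meas : Measurable[𝓛] Γ) (hΓ_int : Integrable Γ P)
    (hH_meas : Measurable[𝓛] H) (hH_int : Integrable H P)
    (hMR_meas : Measurable[𝓛] M_R) (hMR_int : Integrable M_R P)
    (hMS_meas : Measurable[𝓛] M_S) (hMS_int : Integrable M_S P)
    (hπ01 : ∀ ω, 0 ≤ π ω ∧ π ω ≤ 1)
    (hΓ01 : ∀ ω, 0 ≤ Γ ω ∧ Γ ω ≤ 1)
    (hH01 : ∀ ω, 0 ≤ H ω ∧ H ω ≤ 1)
    -- characterizations
    (hπ : P[ind | 𝓛] =ᵐ[P] π)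
    (hΓ : P[fun ω => ind ω * R ω | 𝓛] =ᵐ[P] fun ω => Γ ω * π ω)
    (hH : P[fun ω => ind ω * S ω | 𝓛]
      =ᵐ[P] fun ω => H ω * (P[fun ω' => ind ω' * (1 - R ω') | 𝓛]) ω)
    (hMR : P[fun ω => ind ω * R ω * Y ω | 𝓛] =ᵐ[P] fun ω => M_R ω * (Γ ω * π ω))
    (hMS : P[fun ω => ind ω * S ω * Y ω | 𝓛]
      =ᵐ[P] fun ω => M_S ω * (H ω * ((1 - Γ ω) * π ω)))
    -- definition of μ
    (μ : Ω → ℝ) (hμdef : μ = fun ω => Γ ω * M_R ω + (1 - Γ ω) * M_S ω)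
    -- positivity and integrability
    (ε : ℝ) (hε : 0 < ε)
    (hπpos : ∀ᵐ ω ∂P, ε ≤ π ω)
    (hHpos : ∀ᵐ ω ∂P, ε ≤ H ω)
    (hμ_int : Integrable μ P) :
    (∫ ω, (μ ω + (ind ω / π ω) *
        ((R ω + S ω / H ω) * Y ω - μ ω
          + (1 - R ω) * (1 - S ω / H ω) * M_S ω)) ∂P
      = ∫ ω, μ ω ∂P)
    ∧ ∫ ω, (ind ω / π ω) *
        ((R ω + S ω / H ω) * Y ω - μ ω
          + (1 - R ω) * (1 - S ω / H ω) * M_S ω) ∂P = 0 := by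
  subst h𝓛
  have hm := hL.comap_le
  have hT : Measurable ind :=
    hind ▸ Measurable.ite (hA (measurableSet_singleton a)) measurable_const measurable_const
  have hT_mem : ∀ ω, ind ω ∈ unitInterval := fun ω =>
    unitInterval.mem_of_eq_zero_or_eq_one (by simp only [hind]; split_ifs <;> simp)
  have hR_mem := fun ω => unitInterval.mem_of_eq_zero_or_eq_one (hR01 ω)
  have hS_mem := fun ω => unitInterval.mem_of_eq_zero_or_eq_one (hS01 ω)
  have hμ_meas : Measurable[MeasurableSpace.comap L inferInstance] μ :=
    hμdef ▸ (hΓ_meas.mul hMR_meas).add ((measurable_const.sub hΓ_meas).mul hMS_meas)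
  have hX₁ := integrable_mul_imputed_residual hT hR hT_mem hR_mem hY hμ_int hMS_int
  have hX₂ := integrable_mul_sampled_residual hT hS hT_mem hS_mem hY hMS_int
  have hπH : ∀ᵐ ω ∂P, ε * ε ≤ π ω * H ω := by
    filter_upwards [hπpos, hHpos] with ω h1 h2 using mul_le_mul h1 h2 hε.le (hε.le.trans h1)
  have hI₁ := hX₁.inv_mul_of_le_s3 (hπ_meas.mono hm le_rfl).aemeasurable hε hπpos
  have hI₂ := hX₂.inv_mul_of_le_s3 (w := fun ω => π ω * H ω)
    ((hπ_meas.mul hH_meas).mono hm le_rfl).aemeasurable (mul_pos hε hε) hπH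
  have hsplit := funext fun ω => influence_term_eq_add (t := ind ω) (p := π ω) (h := H ω)
    (y := Y ω) (μ := μ ω) (m := M_S ω) (hSR ω)
  have hmean₁ :
      ∫ ω, (π ω)⁻¹ * (ind ω * (R ω * Y ω - μ ω + (1 - R ω) * M_S ω)) ∂P = 0 :=
    integral_mul_eq_zero_of_condExp_eq_zero hm hπ_meas.inv.stronglyMeasurable hI₁ hX₁
      (condExp_mul_imputed_residual_eq_zero hT hR hT_mem hR_mem hY hμ_meas.stronglyMeasurable
        hMS_meas.stronglyMeasurable hμ_int hMS_int hπ hΓ hMR hμdef)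
  have hmean₂ : ∫ ω, (π ω * H ω)⁻¹ * (ind ω * S ω * (Y ω - M_S ω)) ∂P = 0 :=
    integral_mul_eq_zero_of_condExp_eq_zero hm (hπ_meas.mul hH_meas).inv.stronglyMeasurable hI₂
      hX₂ (condExp_mul_sampled_residual_eq_zero hT hR hS hT_mem hR_mem hS_mem hY
        hMS_meas.stronglyMeasurable hMS_int hπ hΓ hH hMS)
  have hmean : ∫ ω, (ind ω / π ω) *
      ((R ω + S ω / H ω) * Y ω - μ ω + (1 - R ω) * (1 - S ω / H ω) * M_S ω) ∂P = 0 := by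
    rw [hsplit, integral_add hI₁ hI₂, hmean₁, hmean₂, add_zero]
  refine ⟨?_, hmean⟩
  rw [integral_add hμ_int (hsplit ▸ hI₁.add hI₂), hmean, add_zero]
end

section
/- Mean-zero property of the MAR-efficient influence function (Theorem 1, second part): let D := π·(Γ + (1−Γ)·H) and assume D ≥ ε almost surely for some ε > 0 and that M_MAR is integrable. Then (i) E[1{A=a}·(R+S)|𝓛] = D almost everywhere, and (ii) E[1{A=a}·(R+S)·(Y − M_MAR)/D] = 0; equivalently, the paper's influence function τ̇_a*(O;P) = μ_{a,MAR}(L) − τ_a*(P) + 1(A=a)(R+S)(Y − μ_{a,MAR}(L)) / (π_a(L)·{γ_a(L) + (1−γ_a(L))·η_{a,0}(L)}) has P-mean zero, where τ_a*(P) := E[M_MAR]. -/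
/-!
Conditioning on `L`, the double-sampling design gives
`E[1{A=a}(R+S) | L] = E[1{A=a}R | L] + η · E[1{A=a}(1-R) | L] = π (γ + (1-γ) η) = D`, and the
definition of `μ_MAR` makes `E[1{A=a}(R+S)(Y - μ_MAR) | L]` vanish. Since `1/D` is a bounded
`L`-measurable weight, it can be pulled out of the conditional expectation, so the weighted
residual has mean zero.
-/

open MeasureTheory

section CondExp

variable {Ω : Type*} {m m0 : MeasurableSpace Ω} {μ : Measure Ω}

lemma integrable_of_eq_zero_or_one [IsFiniteMeasure μ] {f : Ω → ℝ} (hf : Measurable f)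
    (h01 : ∀ ω, f ω = 0 ∨ f ω = 1) : Integrable f μ :=
  .of_bound hf.aestronglyMeasurable 1 <| ae_of_all _ fun ω => by
    rcases h01 ω with h | h <;> simp [h]

lemma MeasureTheory.Integrable.mul_of_eq_zero_or_one {f g : Ω → ℝ} (hg : Integrable g μ) (hf : Measurable f)
    (h01 : ∀ ω, f ω = 0 ∨ f ω = 1) : Integrable (fun ω => f ω * g ω) μ :=
  hg.bdd_mul (c := 1) hf.aestronglyMeasurable <| ae_of_all _ fun ω => by
    rcases h01 ω with h | h <;> simp [h]

theorem condExp_mul_add_eq {f R S π Γ H : Ω → ℝ} (hf : Integrable f μ)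
    (hfR : Integrable (fun ω => f ω * R ω) μ) (hfS : Integrable (fun ω => f ω * S ω) μ)
    (hπ : μ[f | m] =ᵐ[μ] π) (hΓ : μ[fun ω => f ω * R ω | m] =ᵐ[μ] fun ω => Γ ω * π ω)
    (hH : μ[fun ω => f ω * S ω | m]
      =ᵐ[μ] fun ω => H ω * (μ[fun ω' => f ω' * (1 - R ω') | m]) ω) :
    μ[fun ω => f ω * (R ω + S ω) | m] =ᵐ[μ] fun ω => π ω * (Γ ω + (1 - Γ ω) * H ω) := by
  have hadd : μ[fun ω => f ω * (R ω + S ω) | m]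
      =ᵐ[μ] μ[fun ω => f ω * R ω | m] + μ[fun ω => f ω * S ω | m] := by
    rw [show (fun ω => f ω * (R ω + S ω)) = (fun ω => f ω * R ω) + fun ω => f ω * S ω from
      funext fun ω => mul_add _ _ _]
    exact condExp_add hfR hfS m
  have hsub : μ[fun ω => f ω * (1 - R ω) | m] =ᵐ[μ] μ[f | m] - μ[fun ω => f ω * R ω | m] := by
    rw [show (fun ω => f ω * (1 - R ω)) = f - fun ω => f ω * R ω from
      funext fun ω => mul_one_sub _ _]
    exact condExp_sub hf hfR m
  filter_upwards [hadd, hsub, hπ, hΓ, hH] with ω hadd hsub hπ hΓ hH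
  simp only [Pi.add_apply, Pi.sub_apply] at hadd hsub
  rw [hadd, hΓ, hH, hsub, hπ, hΓ]
  ring

theorem condExp_mul_sub_eq_zero {f Y M : Ω → ℝ} (hf : Integrable f μ)
    (hfY : Integrable (fun ω => f ω * Y ω) μ) (hfM : Integrable (fun ω => f ω * M ω) μ)
    (hM : StronglyMeasurable[m] M)
    (hY : μ[fun ω => f ω * Y ω | m] =ᵐ[μ] fun ω => M ω * (μ[f | m]) ω) :
    μ[fun ω => f ω * (Y ω - M ω) | m] =ᵐ[μ] 0 := by
  have hsub : μ[fun ω => f ω * (Y ω - M ω) | m]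
      =ᵐ[μ] μ[fun ω => f ω * Y ω | m] - μ[fun ω => f ω * M ω | m] := by
    rw [show (fun ω => f ω * (Y ω - M ω)) = (fun ω => f ω * Y ω) - fun ω => f ω * M ω from
      funext fun ω => mul_sub _ _ _]
    exact condExp_sub hfY hfM m
  have hpull : μ[fun ω => f ω * M ω | m] =ᵐ[μ] μ[f | m] * M :=
    condExp_mul_of_stronglyMeasurable_right hM hfM hf
  filter_upwards [hsub, hpull, hY] with ω hsub hpull hY
  simp only [Pi.sub_apply, Pi.mul_apply, Pi.zero_apply] at hsub hpull ⊢
  rw [hsub, hpull, hY, mul_comm, sub_self]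

theorem integral_div_eq_zero_of_condExp_eq_zero [IsFiniteMeasure μ] (hm : m ≤ m0)
    {g D : Ω → ℝ} {ε : ℝ} (hg : Integrable g μ) (hD : Measurable[m] D) (hε : 0 < ε)
    (hDε : ∀ᵐ ω ∂μ, ε ≤ D ω) (hcond : μ[g | m] =ᵐ[μ] 0) :
    ∫ ω, g ω / D ω ∂μ = 0 := by
  have hW : StronglyMeasurable[m] D⁻¹ := hD.inv.stronglyMeasurable
  have hW_bound : ∀ᵐ ω ∂μ, ‖D⁻¹ ω‖ ≤ ε⁻¹ := by
    filter_upwards [hDε] with ω hω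
    rw [Pi.inv_apply, norm_inv, Real.norm_of_nonneg (hε.trans_le hω).le]
    exact inv_anti₀ hε hω
  have hWg : Integrable (D⁻¹ * g) μ := hg.bdd_mul (hW.mono hm).aestronglyMeasurable hW_bound
  have hcond' : μ[D⁻¹ * g | m] =ᵐ[μ] 0 := by
    filter_upwards [condExp_mul_of_stronglyMeasurable_left hW hWg hg, hcond] with ω h h0
    simp [h, h0]
  calc ∫ ω, g ω / D ω ∂μ = ∫ ω, (μ[D⁻¹ * g | m]) ω ∂μ := by
        rw [integral_condExp hm]; simp only [Pi.mul_apply, Pi.inv_apply, div_eq_inv_mul]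
    _ = 0 := by simp [integral_congr_ae hcond']

end CondExp

/-- Mean-zero property of the MAR-efficient influence function (Theorem 1, second part):
with `D := π·(Γ + (1−Γ)·H) ≥ ε` a.s., (i) `E[1{A=a}(R+S)|𝓛] = D` a.e., and
(ii) `E[1{A=a}(R+S)(Y − M_MAR)/D] = 0`, i.e. the MAR-efficient influence function
has `P`-mean zero. -/
theorem MAR_IF_mean_zero
    {Ω : Type*} [MeasurableSpace Ω] (P : Measure Ω) [IsProbabilityMeasure P]
    {d : ℕ} (L : Ω → (Fin d → ℝ)) (A R S Y : Ω → ℝ)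
    (hL : Measurable L) (hA : Measurable A) (hR : Measurable R)
    (hS : Measurable S) (hY : Integrable Y P)
    (hA01 : ∀ ω, A ω = 0 ∨ A ω = 1)
    (hR01 : ∀ ω, R ω = 0 ∨ R ω = 1)
    (hS01 : ∀ ω, S ω = 0 ∨ S ω = 1)
    (hSR : ∀ ω, S ω * R ω = 0)
    (a : ℝ) (ha : a = 0 ∨ a = 1)
    (𝓛 : MeasurableSpace Ω) (h𝓛 : 𝓛 = MeasurableSpace.comap L inferInstance)
    (ind : Ω → ℝ) (hind : ind = fun ω => if A ω = a then (1:ℝ) else 0)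
    -- arm-a nuisance random variables
    (π Γ H M_MAR : Ω → ℝ)
    (hπ_meas : Measurable[𝓛] π) (hπ_int : Integrable π P)
    (hΓ_meas : Measurable[𝓛] Γ) (hΓ_int : Integrable Γ P)
    (hH_meas : Measurable[𝓛] H) (hH_int : Integrable H P)
    (hMMAR_meas : Measurable[𝓛] M_MAR) (hMMAR_int : Integrable M_MAR P)
    (hπ01 : ∀ ω, 0 ≤ π ω ∧ π ω ≤ 1)
    (hΓ01 : ∀ ω, 0 ≤ Γ ω ∧ Γ ω ≤ 1)
    (hH01 : ∀ ω, 0 ≤ H ω ∧ H ω ≤ 1)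
    -- characterizations
    (hπ : P[ind | 𝓛] =ᵐ[P] π)
    (hΓ : P[fun ω => ind ω * R ω | 𝓛] =ᵐ[P] fun ω => Γ ω * π ω)
    (hH : P[fun ω => ind ω * S ω | 𝓛]
      =ᵐ[P] fun ω => H ω * (P[fun ω' => ind ω' * (1 - R ω') | 𝓛]) ω)
    (hMMAR : P[fun ω => ind ω * (R ω + S ω) * Y ω | 𝓛]
      =ᵐ[P] fun ω => M_MAR ω * (P[fun ω' => ind ω' * (R ω' + S ω') | 𝓛]) ω)
    -- definition of D and positivity
    (D : Ω → ℝ) (hDdef : D = fun ω => π ω * (Γ ω + (1 - Γ ω) * H ω))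
    (ε : ℝ) (hε : 0 < ε)
    (hDpos : ∀ᵐ ω ∂P, ε ≤ D ω) :
    (P[fun ω => ind ω * (R ω + S ω) | 𝓛] =ᵐ[P] D)
    ∧ ∫ ω, ind ω * (R ω + S ω) * (Y ω - M_MAR ω) / D ω ∂P = 0 := by
  subst hDdef h𝓛
  have hind_meas : Measurable ind := hind ▸
    .ite (measurableSet_eq_fun hA measurable_const) measurable_const measurable_const
  have hind01 : ∀ ω, ind ω = 0 ∨ ind ω = 1 := fun ω => by
    rw [hind]; by_cases h : A ω = a <;> simp [h]
  have hobs_meas : Measurable fun ω => ind ω * (R ω + S ω) := hind_meas.mul (hR.add hS)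
  have hobs01 : ∀ ω, ind ω * (R ω + S ω) = 0 ∨ ind ω * (R ω + S ω) = 1 := fun ω => by
    have := hSR ω
    rcases hind01 ω with h | h <;> rcases hR01 ω with hr | hr <;> rcases hS01 ω with hs | hs <;>
      simp_all
  refine ⟨condExp_mul_add_eq (integrable_of_eq_zero_or_one hind_meas hind01)
    ((integrable_of_eq_zero_or_one hR hR01).mul_of_eq_zero_or_one hind_meas hind01)
    ((integrable_of_eq_zero_or_one hS hS01).mul_of_eq_zero_or_one hind_meas hind01) hπ hΓ hH, ?_⟩
  refine integral_div_eq_zero_of_condExp_eq_zero hL.comap_le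
    ((hY.sub hMMAR_int).mul_of_eq_zero_or_one hobs_meas hobs01)
    (hπ_meas.mul (hΓ_meas.add ((hΓ_meas.const_sub 1).mul hH_meas))) hε hDpos ?_
  exact condExp_mul_sub_eq_zero (integrable_of_eq_zero_or_one hobs_meas hobs01)
    (hY.mul_of_eq_zero_or_one hobs_meas hobs01) (hMMAR_int.mul_of_eq_zero_or_one hobs_meas hobs01)
    hMMAR_meas.stronglyMeasurable hMMAR
end

section
/- Joint conditional independence of (R,S) and Y given (L,A) (section 2.3, third approach): assume (i) outcome missing at random (Assumption 1 of the paper): E[R·f(Y)|𝓖] = E[R|𝓖]·E[f(Y)|𝓖] almost everywhere for every bounded measurable f : ℝ → ℝ; and (ii) Assumption NI. Then for every bounded g : {0,1}×{0,1} → ℝ and every bounded measurable f : ℝ → ℝ, E[g(R,S)·f(Y)|𝓖] = E[g(R,S)|𝓖]·E[f(Y)|𝓖] almost everywhere; that is, (R,S) ⫫ Y | L, A. -/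
/-
Since `R` is binary, a `σ(L,A,R)`-set is `{R = 0} ∩ t₀ ∪ {R = 1} ∩ t₁` with `t₀, t₁` in `𝓖`, and
MAR (applied to `R` and to `1 - R`) then gives `E[f(Y) | 𝓖_R] = E[f(Y) | 𝓖]`. On `{R = 1}` both
`S` and `S·f(Y)` vanish, so NI upgrades to `E[S·f(Y) | 𝓖_R] = E[S | 𝓖_R]·E[f(Y) | 𝓖_R]` everywhere,
and the tower property (with `E[f(Y) | 𝓖_R]` being `𝓖`-measurable) brings this down to `𝓖`.
Finally, on the three possible values of `(R, S)` every `g(R, S)` is an affine combination of `R`,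
`S` and `1`, and the product rule `E[U·f(Y) | 𝓖] = E[U | 𝓖]·E[f(Y) | 𝓖]` is linear in `U`.
-/

open MeasureTheory
open scoped ENNReal

section CondUncorrelated

variable {Ω : Type*} {m m' m0 : MeasurableSpace Ω} {μ : Measure Ω} {U V X : Ω → ℝ}

def CondUncorrelated (m : MeasurableSpace Ω) (μ : Measure[m0] Ω) (U X : Ω → ℝ) : Prop :=
  μ[U * X | m] =ᵐ[μ] μ[U | m] * μ[X | m]

theorem CondUncorrelated.const_smul (h : CondUncorrelated m μ U X) (c : ℝ) :
    CondUncorrelated m μ (c • U) X := by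
  rw [CondUncorrelated, smul_mul_assoc]
  filter_upwards [condExp_smul c (U * X) m, condExp_smul c U m, h] with ω h₁ h₂ h₃
  simp only [Pi.smul_apply, Pi.mul_apply, smul_eq_mul] at h₁ h₂ h₃ ⊢
  rw [h₁, h₂, h₃, mul_assoc]

theorem condUncorrelated_of_ae_mem (hm : m ≤ m0) {t : Set Ω} (ht : MeasurableSet[m] t)
    (hU : ∀ ω ∉ t, U ω = 0) (h : ∀ᵐ ω ∂μ, ω ∈ t → μ[U * X | m] ω = (μ[U | m] * μ[X | m]) ω) :
    CondUncorrelated m μ U X := by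
  have hU_ae : U =ᵐ[μ.restrict tᶜ] 0 := (ae_restrict_iff' (hm _ ht.compl)).2 (ae_of_all _ hU)
  have hUX_ae : U * X =ᵐ[μ.restrict tᶜ] 0 := by
    filter_upwards [hU_ae] with ω hω
    simp [hω]
  have hU_cond := (ae_restrict_iff' (hm _ ht.compl)).1 (condExp_ae_eq_restrict_zero ht.compl hU_ae)
  have hUX_cond :=
    (ae_restrict_iff' (hm _ ht.compl)).1 (condExp_ae_eq_restrict_zero ht.compl hUX_ae)
  filter_upwards [h, hU_cond, hUX_cond] with ω h₁ h₂ h₃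
  by_cases hω : ω ∈ t
  · exact h₁ hω
  · simp [h₂ hω, h₃ hω]

variable [IsFiniteMeasure μ]

theorem CondUncorrelated.add (hU : MemLp U ∞ μ) (hV : MemLp V ∞ μ) (hX : Integrable X μ)
    (hUX : CondUncorrelated m μ U X) (hVX : CondUncorrelated m μ V X) :
    CondUncorrelated m μ (U + V) X := by
  rw [CondUncorrelated, add_mul]
  filter_upwards [condExp_add (hX.mul_of_top_right hU) (hX.mul_of_top_right hV) m,
    condExp_add (hU.integrable le_top) (hV.integrable le_top) m, hUX, hVX] with ω h₁ h₂ h₃ h₄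
  simp only [Pi.add_apply, Pi.mul_apply] at h₁ h₂ h₃ h₄ ⊢
  rw [h₁, h₂, h₃, h₄, add_mul]

theorem condUncorrelated_const (hm : m ≤ m0) (c : ℝ) (X : Ω → ℝ) :
    CondUncorrelated m μ (fun _ ↦ c) X := by
  have hcX : (fun _ ↦ c) * X = c • X := rfl
  rw [CondUncorrelated, hcX, condExp_const hm]
  exact condExp_smul c X m

theorem CondUncorrelated.setIntegral_mul_eq (hm : m ≤ m0) (hU : MemLp U ∞ μ)
    (hX : Integrable X μ) (h : CondUncorrelated m μ U X) {t : Set Ω} (ht : MeasurableSet[m] t) :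
    ∫ ω in t, (U * X) ω ∂μ = ∫ ω in t, (U * μ[X | m]) ω ∂μ := by
  rw [← setIntegral_condExp hm (hX.mul_of_top_right hU) ht,
    ← setIntegral_condExp hm (integrable_condExp.mul_of_top_right hU) ht]
  have hpull : μ[U * μ[X | m] | m] =ᵐ[μ] μ[U | m] * μ[X | m] :=
    condExp_mul_of_stronglyMeasurable_right stronglyMeasurable_condExp
      (integrable_condExp.mul_of_top_right hU) (hU.integrable le_top)
  refine setIntegral_congr_ae (hm t ht) ?_
  filter_upwards [h, hpull] with ω h₁ h₂ _ using h₁.trans h₂.symm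

theorem CondUncorrelated.of_le (hmm' : m ≤ m') (hm' : m' ≤ m0) (hU : MemLp U ∞ μ)
    (hUX : CondUncorrelated m' μ U X) (hX : μ[X | m'] =ᵐ[μ] μ[X | m]) :
    CondUncorrelated m μ U X :=
  calc μ[U * X | m]
      =ᵐ[μ] μ[μ[U * X | m'] | m] := (condExp_condExp_of_le hmm' hm').symm
    _ =ᵐ[μ] μ[μ[U | m'] * μ[X | m] | m] := condExp_congr_ae (hUX.trans (.mul .rfl hX))
    _ =ᵐ[μ] μ[μ[U | m'] | m] * μ[X | m] :=
      condExp_mul_of_stronglyMeasurable_right stronglyMeasurable_condExp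
        (integrable_condExp.mul_of_top_right (hU.condExp le_top)) integrable_condExp
    _ =ᵐ[μ] μ[U | m] * μ[X | m] := .mul (condExp_condExp_of_le hmm' hm') .rfl

end CondUncorrelated

theorem apply_eq_affine_of_binary (g : ℝ × ℝ → ℝ) {r s : ℝ} (hr : r = 0 ∨ r = 1)
    (hs : s = 0 ∨ s = 1) (hsr : s * r = 0) :
    g (r, s) = (g (1, 0) - g (0, 0)) * r + (g (0, 1) - g (0, 0)) * s + g (0, 0) := by
  rcases hr with rfl | rfl <;> rcases hs with rfl | rfl
  · ring
  · ring
  · ring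
  · norm_num at hsr

theorem comap_prodMk_assoc {Ω α β γ : Type*} [MeasurableSpace α] [MeasurableSpace β]
    [MeasurableSpace γ] (X : Ω → α) (Y : Ω → β) (W : Ω → γ) :
    MeasurableSpace.comap (fun ω ↦ (X ω, Y ω, W ω)) inferInstance
      = MeasurableSpace.comap (fun ω ↦ ((X ω, Y ω), W ω)) inferInstance := by
  simp only [inferInstance, Prod.instMeasurableSpace, MeasurableSpace.comap_prodMk, sup_assoc]

section Binary

variable {Ω β : Type*} [mβ : MeasurableSpace β] {Z : Ω → β} {R : Ω → ℝ}

theorem exists_indicator_eq_of_measurableSet_comap_prodMk (hR : ∀ ω, R ω = 0 ∨ R ω = 1)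
    {s : Set Ω} (hs : MeasurableSet[MeasurableSpace.comap (fun ω ↦ (Z ω, R ω)) inferInstance] s) :
    ∃ t₀ t₁ : Set Ω, MeasurableSet[mβ.comap Z] t₀ ∧ MeasurableSet[mβ.comap Z] t₁ ∧
      ∀ X : Ω → ℝ, s.indicator X = t₀.indicator ((1 - R) * X) + t₁.indicator (R * X) := by
  obtain ⟨B, hB, rfl⟩ := hs
  refine ⟨Z ⁻¹' {z | (z, 0) ∈ B}, Z ⁻¹' {z | (z, 1) ∈ B},
    ⟨_, hB.preimage measurable_prodMk_right, rfl⟩, ⟨_, hB.preimage measurable_prodMk_right, rfl⟩,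
    fun X ↦ funext fun ω ↦ ?_⟩
  classical
  rcases hR ω with h | h <;> simp [Set.indicator_apply, h]

theorem comap_le_comap_prodMk {γ : Type*} [MeasurableSpace γ] (Z : Ω → β) (W : Ω → γ) :
    mβ.comap Z ≤ MeasurableSpace.comap (fun ω ↦ (Z ω, W ω)) inferInstance :=
  Measurable.comap_le (measurable_fst.comp (comap_measurable (fun ω ↦ (Z ω, W ω))))

variable {m0 : MeasurableSpace Ω} {μ : Measure Ω}

theorem memLp_top_of_binary (hRm : Measurable R) (hR : ∀ ω, R ω = 0 ∨ R ω = 1) : MemLp R ∞ μ :=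
  memLp_top_of_bound hRm.aestronglyMeasurable 1
    (ae_of_all _ fun ω ↦ by rcases hR ω with h | h <;> simp [h])

variable [IsFiniteMeasure μ] {X : Ω → ℝ}

theorem condExp_comap_prodMk_eq_of_condUncorrelated (hZ : Measurable Z) (hRm : Measurable R)
    (hR : ∀ ω, R ω = 0 ∨ R ω = 1) (hX : Integrable X μ)
    (hRX : CondUncorrelated (mβ.comap Z) μ R X) :
    μ[X | MeasurableSpace.comap (fun ω ↦ (Z ω, R ω)) inferInstance] =ᵐ[μ] μ[X | mβ.comap Z] := by
  have hle : mβ.comap Z ≤ m0 := hZ.comap_le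
  have hle' : MeasurableSpace.comap (fun ω ↦ (Z ω, R ω)) inferInstance ≤ m0 :=
    (hZ.prodMk hRm).comap_le
  have hR_bdd : MemLp R ∞ μ := memLp_top_of_binary hRm hR
  have h1R_bdd : MemLp (1 - R) ∞ μ := (memLp_top_const 1).sub hR_bdd
  have h1RX : CondUncorrelated (mβ.comap Z) μ (1 - R) X := by
    have h1R : 1 - R = (fun _ ↦ (1 : ℝ)) + (-1 : ℝ) • R := by
      ext ω
      simp [sub_eq_add_neg]
    rw [h1R]
    exact (condUncorrelated_const hle 1 X).add (memLp_top_const 1) (hR_bdd.const_smul _) hX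
      (hRX.const_smul _)
  refine (ae_eq_condExp_of_forall_setIntegral_eq hle' hX
    (fun s _ _ ↦ integrable_condExp.integrableOn) (fun s hs _ ↦ ?_)
    (stronglyMeasurable_condExp.mono (comap_le_comap_prodMk Z R)).aestronglyMeasurable).symm
  obtain ⟨t₀, t₁, ht₀, ht₁, hs_ind⟩ := exists_indicator_eq_of_measurableSet_comap_prodMk hR hs
  have hsplit (Y : Ω → ℝ) (hY : Integrable Y μ) : ∫ ω in s, Y ω ∂μ
      = ∫ ω in t₀, ((1 - R) * Y) ω ∂μ + ∫ ω in t₁, (R * Y) ω ∂μ := by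
    rw [← integral_indicator (hle' s hs), hs_ind, integral_add'
      ((hY.mul_of_top_right h1R_bdd).indicator (hle t₀ ht₀))
      ((hY.mul_of_top_right hR_bdd).indicator (hle t₁ ht₁)),
      integral_indicator (hle t₀ ht₀), integral_indicator (hle t₁ ht₁)]
  rw [hsplit _ integrable_condExp, hsplit _ hX, h1RX.setIntegral_mul_eq hle h1R_bdd hX ht₀,
    hRX.setIntegral_mul_eq hle hR_bdd hX ht₁]

theorem condUncorrelated_apply_pair (hZ : Measurable Z) (hRm : Measurable R) {S : Ω → ℝ}
    (hSm : Measurable S) (hR : ∀ ω, R ω = 0 ∨ R ω = 1) (hS : ∀ ω, S ω = 0 ∨ S ω = 1)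
    (hSR : ∀ ω, S ω * R ω = 0) (hX : Integrable X μ) (hRX : CondUncorrelated (mβ.comap Z) μ R X)
    (hSX : ∀ᵐ ω ∂μ, R ω = 0 →
      μ[S * X | MeasurableSpace.comap (fun ω ↦ (Z ω, R ω)) inferInstance] ω
        = (μ[S | MeasurableSpace.comap (fun ω ↦ (Z ω, R ω)) inferInstance]
          * μ[X | MeasurableSpace.comap (fun ω ↦ (Z ω, R ω)) inferInstance]) ω)
    (g : ℝ × ℝ → ℝ) : CondUncorrelated (mβ.comap Z) μ (fun ω ↦ g (R ω, S ω)) X := by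
  have hle' : MeasurableSpace.comap (fun ω ↦ (Z ω, R ω)) inferInstance ≤ m0 :=
    (hZ.prodMk hRm).comap_le
  have hR_meas : Measurable[MeasurableSpace.comap (fun ω ↦ (Z ω, R ω)) inferInstance] R :=
    measurable_snd.comp (comap_measurable (fun ω ↦ (Z ω, R ω)))
  have hR_bdd : MemLp R ∞ μ := memLp_top_of_binary hRm hR
  have hS_bdd : MemLp S ∞ μ := memLp_top_of_binary hSm hS
  have hSX_pair := condUncorrelated_of_ae_mem hle' (hR_meas (measurableSet_singleton 0))
    (fun ω hω ↦ (mul_eq_zero.1 (hSR ω)).resolve_right hω) hSX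
  have hSX_Z := hSX_pair.of_le (comap_le_comap_prodMk Z R) hle' hS_bdd
    (condExp_comap_prodMk_eq_of_condUncorrelated hZ hRm hR hX hRX)
  set c₁ := g (1, 0) - g (0, 0)
  set c₂ := g (0, 1) - g (0, 0)
  have hg : (fun ω ↦ g (R ω, S ω)) = c₁ • R + c₂ • S + fun _ ↦ g (0, 0) :=
    funext fun ω ↦ apply_eq_affine_of_binary g (hR ω) (hS ω) (hSR ω)
  have hRSX : CondUncorrelated (mβ.comap Z) μ (c₁ • R + c₂ • S) X :=
    (hRX.const_smul c₁).add (hR_bdd.const_smul c₁) (hS_bdd.const_smul c₂) hX (hSX_Z.const_smul c₂)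
  rw [hg]
  exact hRSX.add ((hR_bdd.const_smul c₁).add (hS_bdd.const_smul c₂)) (memLp_top_const _) hX
    (condUncorrelated_const hZ.comap_le _ X)

end Binary

/-- Joint conditional independence of `(R,S)` and `Y` given `(L,A)` (section 2.3):
under initial MAR (Assumption 1) and Assumption NI, for every bounded measurable
`g : ℝ×ℝ → ℝ` and bounded measurable `f : ℝ → ℝ`,
`E[g(R,S)·f(Y)|𝓖] = E[g(R,S)|𝓖]·E[f(Y)|𝓖]` a.e.; that is, `(R,S) ⫫ Y | L, A`. -/
theorem joint_conditional_independence
    {Ω : Type*} [MeasurableSpace Ω] (P : Measure Ω) [IsProbabilityMeasure P]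
    {d : ℕ} (L : Ω → (Fin d → ℝ)) (A R S Y : Ω → ℝ)
    (hL : Measurable L) (hA : Measurable A) (hR : Measurable R)
    (hS : Measurable S) (hY : Integrable Y P)
    (hA01 : ∀ ω, A ω = 0 ∨ A ω = 1)
    (hR01 : ∀ ω, R ω = 0 ∨ R ω = 1)
    (hS01 : ∀ ω, S ω = 0 ∨ S ω = 1)
    (hSR : ∀ ω, S ω * R ω = 0)
    (𝓖 : MeasurableSpace Ω)
    (h𝓖 : 𝓖 = MeasurableSpace.comap (fun ω => (L ω, A ω)) inferInstance)
    (𝓖R : MeasurableSpace Ω)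
    (h𝓖R : 𝓖R = MeasurableSpace.comap (fun ω => (L ω, A ω, R ω)) inferInstance)
    -- Assumption 1 of the paper: outcomes missing at random
    (hMAR : ∀ f : ℝ → ℝ, Measurable f → (∃ B, ∀ x, |f x| ≤ B) →
      P[fun ω => R ω * f (Y ω) | 𝓖]
        =ᵐ[P] fun ω => (P[R | 𝓖]) ω * (P[fun ω' => f (Y ω') | 𝓖]) ω)
    -- Assumption NI (no informative second-stage selection)
    (hNI : ∀ f : ℝ → ℝ, Measurable f → (∃ B, ∀ x, |f x| ≤ B) →
      ∀ᵐ ω ∂P, R ω = 0 →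
        (P[fun ω' => S ω' * f (Y ω') | 𝓖R]) ω
          = (P[S | 𝓖R]) ω * (P[fun ω' => f (Y ω') | 𝓖R]) ω)
    (hNIid : ∀ᵐ ω ∂P, R ω = 0 →
      (P[fun ω' => S ω' * Y ω' | 𝓖R]) ω = (P[S | 𝓖R]) ω * (P[Y | 𝓖R]) ω) :
    ∀ g : ℝ × ℝ → ℝ, Measurable g → (∃ B, ∀ x, |g x| ≤ B) →
      ∀ f : ℝ → ℝ, Measurable f → (∃ B, ∀ x, |f x| ≤ B) →
        P[fun ω => g (R ω, S ω) * f (Y ω) | 𝓖]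
          =ᵐ[P] fun ω => (P[fun ω' => g (R ω', S ω') | 𝓖]) ω
            * (P[fun ω' => f (Y ω') | 𝓖]) ω := by
  intro g _ _ f hf ⟨B, hB⟩
  have hfY : Integrable (f ∘ Y) P := (memLp_top_of_bound
    (hf.comp_aemeasurable hY.aemeasurable).aestronglyMeasurable B
      (ae_of_all _ fun ω ↦ hB _)).integrable le_top
  subst h𝓖 h𝓖R
  rw [comap_prodMk_assoc] at hNI
  exact condUncorrelated_apply_pair (hL.prodMk hA) hR hS hR01 hS01 hSR hfY (hMAR f hf ⟨B, hB⟩)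
    (hNI f hf ⟨B, hB⟩) g
end

section
/- Product-error bias decomposition for the nonparametric estimator (Theorem 2, first part): under π ≥ ε and H ≥ ε almost surely, with M_R, M_S integrable and candidate nuisances as specified, E[ μ̃ + (1{A=a}/π̃)·{ (R + S/η̃)·Y − μ̃ + (1−R)·(1 − S/η̃)·μ̃_S } ] − E[μ] = E[(1 − π/π̃)·(μ̃ − μ)] + E[(1−Γ)·(π/π̃)·(1 − H/η̃)·(μ̃_S − M_S)]. The left-hand side is the paper's Bias_{τ_a}(P̃; P) = E_P(τ̇_a(O; P̃)) + τ_a(P̃) − τ_a(P). -/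
/-!
Since `S R = 0`, the estimating function is a linear combination of the observed products
`1{A=a}`, `1{A=a}R`, `1{A=a}S`, `1{A=a}RY`, `1{A=a}SY` with bounded `L`-measurable coefficients
(this is where `π̃, η̃ ≥ ε` enters). Pulling the coefficients out of `E[· | L]` replaces each
product by its nuisance expression, and the resulting function of `L`, minus `μ`, is the sum of
the two product-error terms by a ring identity.
-/

open MeasureTheory
open scoped ENNReal

section CondExpCalculus

variable {Ω : Type*} {m m₀ : MeasurableSpace Ω} {μ : Measure Ω} {c d f f' g g' : Ω → ℝ}

def HasCondExp (m : MeasurableSpace Ω) {m₀ : MeasurableSpace Ω} (μ : Measure Ω) (f g : Ω → ℝ) :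
    Prop :=
  Integrable f μ ∧ μ[f|m] =ᵐ[μ] g

namespace HasCondExp

theorem integrable_right (h : HasCondExp m μ f g) : Integrable g μ :=
  integrable_condExp.congr h.2

theorem congr_left (h : HasCondExp m μ f g) (hf : f =ᵐ[μ] f') : HasCondExp m μ f' g :=
  ⟨h.1.congr hf, (condExp_congr_ae hf).symm.trans h.2⟩

theorem congr_right (h : HasCondExp m μ f g) (hg : g =ᵐ[μ] g') : HasCondExp m μ f g' :=
  ⟨h.1, h.2.trans hg⟩

theorem add (h : HasCondExp m μ f g) (h' : HasCondExp m μ f' g') :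
    HasCondExp m μ (f + f') (g + g') :=
  ⟨h.1.add h'.1, (condExp_add h.1 h'.1 m).trans (h.2.add h'.2)⟩

theorem sub (h : HasCondExp m μ f g) (h' : HasCondExp m μ f' g') :
    HasCondExp m μ (f - f') (g - g') :=
  ⟨h.1.sub h'.1, (condExp_sub h.1 h'.1 m).trans (h.2.sub h'.2)⟩

theorem integral_eq (hm : m ≤ m₀) [SigmaFinite (μ.trim hm)] (h : HasCondExp m μ f g) :
    ∫ ω, f ω ∂μ = ∫ ω, g ω ∂μ :=
  (integral_condExp hm).symm.trans (integral_congr_ae h.2)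

end HasCondExp

def IsBoundedMultiplier (m : MeasurableSpace Ω) {m₀ : MeasurableSpace Ω} (μ : Measure Ω)
    (c : Ω → ℝ) : Prop :=
  StronglyMeasurable[m] c ∧ MemLp c ∞ μ

namespace IsBoundedMultiplier

theorem of_abs_le (hm : m ≤ m₀) (hc : Measurable[m] c) (C : ℝ) (hC : ∀ ω, |c ω| ≤ C) :
    IsBoundedMultiplier m μ c :=
  ⟨hc.stronglyMeasurable,
    memLp_top_of_bound (hc.mono hm le_rfl).aestronglyMeasurable C (.of_forall hC)⟩

theorem of_mem_unitInterval (hm : m ≤ m₀) (hc : Measurable[m] c)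
    (h01 : ∀ ω, 0 ≤ c ω ∧ c ω ≤ 1) : IsBoundedMultiplier m μ c :=
  of_abs_le hm hc 1 fun ω => abs_le.2 ⟨by linarith [h01 ω], (h01 ω).2⟩

theorem inv_of_le (hm : m ≤ m₀) (hc : Measurable[m] c) {ε : ℝ} (hε : 0 < ε)
    (hcε : ∀ ω, ε ≤ c ω) : IsBoundedMultiplier m μ c⁻¹ :=
  of_abs_le hm hc.inv ε⁻¹ fun ω => by
    rw [Pi.inv_apply, abs_inv, abs_of_pos (hε.trans_le (hcε ω))]
    exact inv_anti₀ hε (hcε ω)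

theorem const (x : ℝ) : IsBoundedMultiplier m μ fun _ => x :=
  ⟨stronglyMeasurable_const, memLp_top_const x⟩

theorem add (hc : IsBoundedMultiplier m μ c) (hd : IsBoundedMultiplier m μ d) :
    IsBoundedMultiplier m μ (c + d) :=
  ⟨hc.1.add hd.1, hc.2.add hd.2⟩

theorem sub (hc : IsBoundedMultiplier m μ c) (hd : IsBoundedMultiplier m μ d) :
    IsBoundedMultiplier m μ (c - d) :=
  ⟨hc.1.sub hd.1, hc.2.sub hd.2⟩

theorem mul (hc : IsBoundedMultiplier m μ c) (hd : IsBoundedMultiplier m μ d) :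
    IsBoundedMultiplier m μ (c * d) :=
  ⟨hc.1.mul hd.1, hd.2.mul hc.2⟩

theorem hasCondExp_mul (hc : IsBoundedMultiplier m μ c) (h : HasCondExp m μ f g) :
    HasCondExp m μ (c * f) (c * g) :=
  have hcf : Integrable (c * f) μ := h.1.mul_of_top_right hc.2
  ⟨hcf, (condExp_mul_of_stronglyMeasurable_left hc.1 hcf h.1).trans (.mul .rfl h.2)⟩

theorem hasCondExp_self (hm : m ≤ m₀) [IsFiniteMeasure μ] (hc : IsBoundedMultiplier m μ c) :
    HasCondExp m μ c c :=
  have hci : Integrable c μ := hc.2.integrable le_top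
  ⟨hci, (condExp_of_stronglyMeasurable hm hc.1 hci).eventuallyEq⟩

end IsBoundedMultiplier

end CondExpCalculus

theorem memLp_top_of_zero_or_one {Ω : Type*} {m₀ : MeasurableSpace Ω} {μ : Measure Ω}
    {f : Ω → ℝ} (hf : Measurable f) (h01 : ∀ ω, f ω = 0 ∨ f ω = 1) : MemLp f ∞ μ :=
  memLp_top_of_bound hf.aestronglyMeasurable 1
    (.of_forall fun ω => by rcases h01 ω with h | h <;> simp [h])

theorem estimating_function_eq (i r s y πt ηt μt μS : ℝ) (hsr : s * r = 0) :
    μt + i / πt * ((r + s / ηt) * y - μt + (1 - r) * (1 - s / ηt) * μS)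
      = μt + πt⁻¹ * (i * r * y + ηt⁻¹ * (i * s * y) + (μS - μt) * i - μS * (i * r)
          - μS * ηt⁻¹ * (i * s)) := by
  linear_combination i / πt * μS / ηt * hsr

theorem conditional_estimating_function_sub_eq (π Γ H M_R M_S πt ηt μt μS : ℝ) :
    μt + πt⁻¹ * (M_R * (Γ * π) + ηt⁻¹ * (M_S * (H * ((1 - Γ) * π))) + (μS - μt) * π
        - μS * (Γ * π) - μS * ηt⁻¹ * (H * (π - Γ * π)))
      - (Γ * M_R + (1 - Γ) * M_S)
    = (1 - π / πt) * (μt - (Γ * M_R + (1 - Γ) * M_S))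
      + (1 - Γ) * (π / πt) * (1 - H / ηt) * (μS - M_S) := by
  ring

section EstimatingFunction

variable {Ω : Type*} {m m₀ : MeasurableSpace Ω} {P : Measure Ω}
  {ind R S Y π Γ H M_R M_S πt ηt μt μS g₁ g₂ g₃ g₄ g₅ : Ω → ℝ}

theorem hasCondExp_ind_mul_of_condExp_eq_mul_complement (hind : HasCondExp m P ind π)
    (hindR : HasCondExp m P (fun ω => ind ω * R ω) (fun ω => Γ ω * π ω))
    (hindS : Integrable (fun ω => ind ω * S ω) P)
    (hH : P[fun ω => ind ω * S ω | m] =ᵐ[P] fun ω => H ω * P[fun ω' => ind ω' * (1 - R ω') | m] ω) :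
    HasCondExp m P (fun ω => ind ω * S ω) (fun ω => H ω * (π ω - Γ ω * π ω)) :=
  have hnotR : HasCondExp m P (fun ω => ind ω * (1 - R ω)) (π - fun ω => Γ ω * π ω) :=
    (hind.sub hindR).congr_left (.of_forall fun _ => (mul_one_sub _ _).symm)
  HasCondExp.congr_right ⟨hindS, hH⟩ (.mul .rfl hnotR.2)

theorem hasCondExp_estimating_function (hm : m ≤ m₀) [IsFiniteMeasure P]
    (hsr : ∀ ω, S ω * R ω = 0) (hπt : IsBoundedMultiplier m P πt⁻¹)
    (hηt : IsBoundedMultiplier m P ηt⁻¹) (hμt : IsBoundedMultiplier m P μt)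
    (hμS : IsBoundedMultiplier m P μS)
    (h₁ : HasCondExp m P (fun ω => ind ω * R ω * Y ω) g₁)
    (h₂ : HasCondExp m P (fun ω => ind ω * S ω * Y ω) g₂) (h₃ : HasCondExp m P ind g₃)
    (h₄ : HasCondExp m P (fun ω => ind ω * R ω) g₄)
    (h₅ : HasCondExp m P (fun ω => ind ω * S ω) g₅) :
    HasCondExp m P
      (fun ω => μt ω + ind ω / πt ω *
        ((R ω + S ω / ηt ω) * Y ω - μt ω + (1 - R ω) * (1 - S ω / ηt ω) * μS ω))
      (fun ω => μt ω + (πt ω)⁻¹ * (g₁ ω + (ηt ω)⁻¹ * g₂ ω + (μS ω - μt ω) * g₃ ω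
        - μS ω * g₄ ω - μS ω * (ηt ω)⁻¹ * g₅ ω)) :=
  ((hμt.hasCondExp_self hm).add (hπt.hasCondExp_mul
    ((((h₁.add (hηt.hasCondExp_mul h₂)).add ((hμS.sub hμt).hasCondExp_mul h₃)).sub
      (hμS.hasCondExp_mul h₄)).sub ((hμS.mul hηt).hasCondExp_mul h₅)))).congr_left
    (.of_forall fun ω => (estimating_function_eq (ind ω) (R ω) (S ω) (Y ω) (πt ω) (ηt ω) (μt ω)
      (μS ω) (hsr ω)).symm)

theorem integral_conditional_estimating_function_sub (hπ : MemLp π ∞ P) (hΓ : MemLp Γ ∞ P)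
    (hH : MemLp H ∞ P) (hπt : MemLp πt⁻¹ ∞ P) (hηt : MemLp ηt⁻¹ ∞ P)
    (hμt : Integrable μt P) (hμS : Integrable μS P) (hMR : Integrable M_R P)
    (hMS : Integrable M_S P)
    (hG : Integrable (fun ω => μt ω + (πt ω)⁻¹ * (M_R ω * (Γ ω * π ω)
      + (ηt ω)⁻¹ * (M_S ω * (H ω * ((1 - Γ ω) * π ω))) + (μS ω - μt ω) * π ω
      - μS ω * (Γ ω * π ω) - μS ω * (ηt ω)⁻¹ * (H ω * (π ω - Γ ω * π ω)))) P) :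
    ∫ ω, (μt ω + (πt ω)⁻¹ * (M_R ω * (Γ ω * π ω)
      + (ηt ω)⁻¹ * (M_S ω * (H ω * ((1 - Γ ω) * π ω))) + (μS ω - μt ω) * π ω
      - μS ω * (Γ ω * π ω) - μS ω * (ηt ω)⁻¹ * (H ω * (π ω - Γ ω * π ω)))) ∂P
      - ∫ ω, (Γ ω * M_R ω + (1 - Γ ω) * M_S ω) ∂P
    = ∫ ω, (1 - π ω / πt ω) * (μt ω - (Γ ω * M_R ω + (1 - Γ ω) * M_S ω)) ∂P
      + ∫ ω, (1 - Γ ω) * (π ω / πt ω) * (1 - H ω / ηt ω) * (μS ω - M_S ω) ∂P := by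
  have h1Γ : MemLp (1 - Γ) ∞ P := (memLp_top_const 1).sub hΓ
  have hμ : Integrable (fun ω => Γ ω * M_R ω + (1 - Γ ω) * M_S ω) P :=
    (hMR.mul_of_top_right hΓ).add (hMS.mul_of_top_right h1Γ)
  have hπ_div : MemLp (π * πt⁻¹) ∞ P := hπt.mul hπ
  have hT₁ := (hμt.sub hμ).mul_of_top_right ((memLp_top_const 1).sub hπ_div)
  have hT₂ := (hμS.sub hMS).mul_of_top_right (((memLp_top_const 1).sub (hηt.mul hH)).mul
    (hπ_div.mul h1Γ : MemLp ((1 - Γ) * (π * πt⁻¹)) ∞ P))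
  rw [← integral_sub hG hμ]
  exact (integral_congr_ae (.of_forall fun ω => conditional_estimating_function_sub_eq (π ω) (Γ ω)
    (H ω) (M_R ω) (M_S ω) (πt ω) (ηt ω) (μt ω) (μS ω))).trans (integral_add hT₁ hT₂)

end EstimatingFunction

/-- Product-error bias decomposition for the nonparametric estimator (Theorem 2, first
part): `E[τ̇_a(O;P̃) + τ_a(P̃)] − τ_a(P)
= E[(1 − π/π̃)(μ̃ − μ)] + E[(1−Γ)(π/π̃)(1 − H/η̃)(μ̃_S − M_S)]`. -/
theorem product_error_bias_tau
    {Ω : Type*} [MeasurableSpace Ω] (P : Measure Ω) [IsProbabilityMeasure P]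
    {d : ℕ} (L : Ω → (Fin d → ℝ)) (A R S Y : Ω → ℝ)
    (hL : Measurable L) (hA : Measurable A) (hR : Measurable R)
    (hS : Measurable S) (hY : Integrable Y P)
    (hA01 : ∀ ω, A ω = 0 ∨ A ω = 1)
    (hR01 : ∀ ω, R ω = 0 ∨ R ω = 1)
    (hS01 : ∀ ω, S ω = 0 ∨ S ω = 1)
    (hSR : ∀ ω, S ω * R ω = 0)
    (a : ℝ) (ha : a = 0 ∨ a = 1)
    (𝓛 : MeasurableSpace Ω) (h𝓛 : 𝓛 = MeasurableSpace.comap L inferInstance)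
    (ind : Ω → ℝ) (hind : ind = fun ω => if A ω = a then (1:ℝ) else 0)
    -- arm-a nuisance random variables
    (π Γ H M_R M_S : Ω → ℝ)
    (hπ_meas : Measurable[𝓛] π) (hπ_int : Integrable π P)
    (hΓ_meas : Measurable[𝓛] Γ) (hΓ_int : Integrable Γ P)
    (hH_meas : Measurable[𝓛] H) (hH_int : Integrable H P)
    (hMR_meas : Measurable[𝓛] M_R) (hMR_int : Integrable M_R P)
    (hMS_meas : Measurable[𝓛] M_S) (hMS_int : Integrable M_S P)
    (hπ01 : ∀ ω, 0 ≤ π ω ∧ π ω ≤ 1)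
    (hΓ01 : ∀ ω, 0 ≤ Γ ω ∧ Γ ω ≤ 1)
    (hH01 : ∀ ω, 0 ≤ H ω ∧ H ω ≤ 1)
    -- characterizations
    (hπ : P[ind | 𝓛] =ᵐ[P] π)
    (hΓ : P[fun ω => ind ω * R ω | 𝓛] =ᵐ[P] fun ω => Γ ω * π ω)
    (hH : P[fun ω => ind ω * S ω | 𝓛]
      =ᵐ[P] fun ω => H ω * (P[fun ω' => ind ω' * (1 - R ω') | 𝓛]) ω)
    (hMR : P[fun ω => ind ω * R ω * Y ω | 𝓛] =ᵐ[P] fun ω => M_R ω * (Γ ω * π ω))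
    (hMS : P[fun ω => ind ω * S ω * Y ω | 𝓛]
      =ᵐ[P] fun ω => M_S ω * (H ω * ((1 - Γ ω) * π ω)))
    -- true outcome regression μ
    (μ : Ω → ℝ) (hμdef : μ = fun ω => Γ ω * M_R ω + (1 - Γ ω) * M_S ω)
    -- positivity of true nuisances
    (ε : ℝ) (hε : 0 < ε)
    (hπpos : ∀ᵐ ω ∂P, ε ≤ π ω)
    (hHpos : ∀ᵐ ω ∂P, ε ≤ H ω)
    -- candidate (possibly misspecified) nuisances
    (πt ηt γt μtR μtS : Ω → ℝ)
    (hπt_meas : Measurable[𝓛] πt) (hηt_meas : Measurable[𝓛] ηt)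
    (hγt_meas : Measurable[𝓛] γt) (hμtR_meas : Measurable[𝓛] μtR)
    (hμtS_meas : Measurable[𝓛] μtS)
    (hπt_bdd : ∃ B, ∀ ω, |πt ω| ≤ B) (hηt_bdd : ∃ B, ∀ ω, |ηt ω| ≤ B)
    (hμtR_bdd : ∃ B, ∀ ω, |μtR ω| ≤ B) (hμtS_bdd : ∃ B, ∀ ω, |μtS ω| ≤ B)
    (hπt_pos : ∀ ω, ε ≤ πt ω) (hηt_pos : ∀ ω, ε ≤ ηt ω)
    (hγt01 : ∀ ω, 0 ≤ γt ω ∧ γt ω ≤ 1)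
    (μt : Ω → ℝ) (hμtdef : μt = fun ω => γt ω * μtR ω + (1 - γt ω) * μtS ω) :
    ∫ ω, (μt ω + (ind ω / πt ω) *
        ((R ω + S ω / ηt ω) * Y ω - μt ω
          + (1 - R ω) * (1 - S ω / ηt ω) * μtS ω)) ∂P
      - ∫ ω, μ ω ∂P
    = ∫ ω, (1 - π ω / πt ω) * (μt ω - μ ω) ∂P
      + ∫ ω, (1 - Γ ω) * (π ω / πt ω) * (1 - H ω / ηt ω) * (μtS ω - M_S ω) ∂P := by
  subst hμdef
  have hm : 𝓛 ≤ _ := h𝓛 ▸ hL.comap_le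
  obtain ⟨BR, hBR⟩ := hμtR_bdd
  obtain ⟨BS, hBS⟩ := hμtS_bdd
  have hπt' := IsBoundedMultiplier.inv_of_le (μ := P) hm hπt_meas hε hπt_pos
  have hηt' := IsBoundedMultiplier.inv_of_le (μ := P) hm hηt_meas hε hηt_pos
  have hμtS' := IsBoundedMultiplier.of_abs_le (μ := P) hm hμtS_meas BS hBS
  have hγt' := IsBoundedMultiplier.of_mem_unitInterval (μ := P) hm hγt_meas hγt01
  have hμt' : IsBoundedMultiplier 𝓛 P μt := hμtdef ▸ (hγt'.mul (.of_abs_le hm hμtR_meas BR hBR)).add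
    (((IsBoundedMultiplier.const 1).sub hγt').mul hμtS')
  have hind_mem : MemLp ind ∞ P := hind ▸ memLp_top_of_zero_or_one
    (measurable_const.ite (hA (measurableSet_singleton a)) measurable_const)
    fun ω => by split_ifs <;> simp
  have hindR_mem : MemLp (fun ω => ind ω * R ω) ∞ P :=
    (memLp_top_of_zero_or_one hR hR01).mul hind_mem
  have hindS_mem : MemLp (fun ω => ind ω * S ω) ∞ P :=
    (memLp_top_of_zero_or_one hS hS01).mul hind_mem
  have hcond_ind : HasCondExp 𝓛 P ind π := ⟨hind_mem.integrable le_top, hπ⟩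
  have hcond_indR : HasCondExp 𝓛 P (fun ω => ind ω * R ω) (fun ω => Γ ω * π ω) :=
    ⟨hindR_mem.integrable le_top, hΓ⟩
  have hcond := hasCondExp_estimating_function hm hSR hπt' hηt' hμt' hμtS'
    ⟨hY.mul_of_top_right hindR_mem, hMR⟩ ⟨hY.mul_of_top_right hindS_mem, hMS⟩ hcond_ind hcond_indR
    (hasCondExp_ind_mul_of_condExp_eq_mul_complement hcond_ind hcond_indR
      (hindS_mem.integrable le_top) hH)
  rw [hcond.integral_eq hm]
  exact integral_conditional_estimating_function_sub
    (IsBoundedMultiplier.of_mem_unitInterval hm hπ_meas hπ01).2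
    (IsBoundedMultiplier.of_mem_unitInterval hm hΓ_meas hΓ01).2
    (IsBoundedMultiplier.of_mem_unitInterval hm hH_meas hH01).2 hπt'.2 hηt'.2
    (hμt'.2.integrable le_top) (hμtS'.2.integrable le_top) hMR_int hMS_int hcond.integrable_right
end

section
/- Product-error bias decomposition for the MAR-efficient estimator (Theorem 2, second part): assume D := π·(Γ + (1−Γ)·H) ≥ ε almost surely for some ε > 0, M_MAR is integrable, and candidate nuisances π̃, γ̃, η̃, μ̃_MAR satisfy D̃ := π̃·(γ̃ + (1−γ̃)·η̃) ≥ ε almost surely. Then E[ μ̃_MAR + 1{A=a}·(R+S)·(Y − μ̃_MAR)/D̃ ] − E[M_MAR] = E[(1 − D/D̃)·(μ̃_MAR − M_MAR)]. The left-hand side is the paper's Bias_{τ_a*}(P̃; P). -/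
open MeasureTheory

/-!
Write `G := 1{A=a}(R+S)`. The nuisance characterizations say that `E[G | L] = D` and
`E[G Y | L] = M_MAR D`. Since `1/D̃` and `μ̃_MAR` are functions of `L`, conditioning on `L`
turns `E[G (Y − μ̃_MAR) / D̃]` into `E[(M_MAR − μ̃_MAR) D / D̃]`, and adding
`E[μ̃_MAR] − E[M_MAR]` gives the product-error form.
-/

namespace MeasureTheory

variable {Ω : Type*} {m m₀ : MeasurableSpace Ω} {μ : Measure Ω}

theorem integral_mul_condExp_of_stronglyMeasurable (hm : m ≤ m₀) [SigmaFinite (μ.trim hm)]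
    {w g : Ω → ℝ} (hw : StronglyMeasurable[m] w) (hwg : Integrable (w * g) μ)
    (hg : Integrable g μ) :
    ∫ ω, w ω * g ω ∂μ = ∫ ω, w ω * μ[g | m] ω ∂μ :=
  (integral_condExp hm).symm.trans
    (integral_congr_ae (condExp_mul_of_stronglyMeasurable_left hw hwg hg))

theorem condExp_mul_add_ae_eq {I R S π Γ H : Ω → ℝ} (hI : Integrable I μ)
    (hIR : Integrable (I * R) μ) (hIS : Integrable (I * S) μ)
    (hπ : μ[I | m] =ᵐ[μ] π) (hΓ : μ[I * R | m] =ᵐ[μ] Γ * π)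
    (hH : μ[I * S | m] =ᵐ[μ] H * μ[I * (1 - R) | m]) :
    μ[I * (R + S) | m] =ᵐ[μ] π * (Γ + (1 - Γ) * H) := by
  have h_not_R : μ[I * (1 - R) | m] =ᵐ[μ] π - Γ * π := by
    rw [mul_sub, mul_one]
    filter_upwards [condExp_sub hI hIR m, hπ, hΓ] with ω h hπω hΓω
    rw [h, Pi.sub_apply, hπω, hΓω, Pi.sub_apply]
  rw [mul_add]
  filter_upwards [condExp_add hIR hIS m, hΓ, hH, h_not_R] with ω h hΓω hHω h_not_Rω
  simp only [h, Pi.add_apply, Pi.mul_apply, Pi.sub_apply, Pi.one_apply, hΓω, hHω, h_not_Rω]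
  ring

theorem condExp_mul_sub_ae_eq {G Y M D ν : Ω → ℝ} (hν : StronglyMeasurable[m] ν)
    (hG : Integrable G μ) (hGY : Integrable (G * Y) μ) (hνG : Integrable (ν * G) μ)
    (hD : μ[G | m] =ᵐ[μ] D) (hM : μ[G * Y | m] =ᵐ[μ] M * D) :
    μ[G * (Y - ν) | m] =ᵐ[μ] (M - ν) * D := by
  have h_split : G * (Y - ν) = G * Y - ν * G := by ring
  rw [h_split]
  filter_upwards [condExp_sub hGY hνG m, condExp_mul_of_stronglyMeasurable_left hν hνG hG,
    hD, hM] with ω h hνω hDω hMω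
  simp only [h, Pi.sub_apply, Pi.mul_apply, hMω, hνω, hDω]
  ring

/-- `ν + G (Y - ν) / Dt` is the augmented inverse-probability-weighted (AIPW) estimator with
outcome regression `ν` and weight denominator `Dt`; `D` and `M` are the true ones. -/
theorem integral_aipw_sub_integral_eq (hm : m ≤ m₀) [IsFiniteMeasure μ]
    {G Y M D ν Dt : Ω → ℝ} {ε C : ℝ} (hε : 0 < ε)
    (hν : Measurable[m] ν) (hνC : ∀ᵐ ω ∂μ, |ν ω| ≤ C)
    (hDt : Measurable[m] Dt) (hDtε : ∀ᵐ ω ∂μ, ε ≤ Dt ω)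
    (hG : Integrable G μ) (hGY : Integrable (G * Y) μ) (hM : Integrable M μ)
    (hD : μ[G | m] =ᵐ[μ] D) (hMD : μ[G * Y | m] =ᵐ[μ] M * D) :
    ∫ ω, (ν ω + G ω * (Y ω - ν ω) / Dt ω) ∂μ - ∫ ω, M ω ∂μ
      = ∫ ω, (1 - D ω / Dt ω) * (ν ω - M ω) ∂μ := by
  have hν₀ : AEStronglyMeasurable ν μ := (hν.mono hm le_rfl).aestronglyMeasurable
  have hDt_inv₀ : AEStronglyMeasurable (fun ω => (Dt ω)⁻¹) μ :=
    (hDt.mono hm le_rfl).inv.aestronglyMeasurable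
  have hDt_inv_le : ∀ᵐ ω ∂μ, ‖(Dt ω)⁻¹‖ ≤ ε⁻¹ := by
    filter_upwards [hDtε] with ω hω
    rw [Real.norm_eq_abs, abs_inv, abs_of_pos (hε.trans_le hω)]
    exact inv_anti₀ hε hω
  have hν_int : Integrable ν μ := .of_bound hν₀ C hνC
  have hνG : Integrable (ν * G) μ := hG.bdd_mul hν₀ hνC
  have hf : Integrable (G * (Y - ν)) μ := by
    rw [show G * (Y - ν) = G * Y - ν * G by ring]
    exact hGY.sub hνG
  have hcond := condExp_mul_sub_ae_eq hν.stronglyMeasurable hG hGY hνG hD hMD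
  have hweighted : ∫ ω, G ω * (Y ω - ν ω) / Dt ω ∂μ
      = ∫ ω, (Dt ω)⁻¹ * ((M ω - ν ω) * D ω) ∂μ := calc
    _ = ∫ ω, (Dt ω)⁻¹ * (G * (Y - ν)) ω ∂μ := by
      simp only [Pi.mul_apply, Pi.sub_apply, div_eq_inv_mul]
    _ = ∫ ω, (Dt ω)⁻¹ * μ[G * (Y - ν) | m] ω ∂μ :=
      integral_mul_condExp_of_stronglyMeasurable hm hDt.inv.stronglyMeasurable
        (hf.bdd_mul hDt_inv₀ hDt_inv_le) hf
    _ = _ := integral_congr_ae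
      (hcond.mono fun ω hω => by simp only [hω, Pi.mul_apply, Pi.sub_apply])
  have hweighted_int : Integrable (fun ω => G ω * (Y ω - ν ω) / Dt ω) μ :=
    (hf.bdd_mul hDt_inv₀ hDt_inv_le).congr (.of_forall fun ω => by
      simp only [Pi.mul_apply, Pi.sub_apply, div_eq_inv_mul])
  have hproduct_int : Integrable (fun ω => (Dt ω)⁻¹ * ((M ω - ν ω) * D ω)) μ :=
    ((integrable_condExp (m := m) (f := G * (Y - ν))).bdd_mul hDt_inv₀ hDt_inv_le).congr
      (hcond.mono fun ω hω => by simp only [hω, Pi.mul_apply, Pi.sub_apply])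
  have hsplit : ∫ ω, (1 - D ω / Dt ω) * (ν ω - M ω) ∂μ
      = ∫ ω, (ν ω - M ω) ∂μ + ∫ ω, (Dt ω)⁻¹ * ((M ω - ν ω) * D ω) ∂μ := by
    rw [← integral_add (f := fun ω => ν ω - M ω) (hν_int.sub hM) hproduct_int]
    congr 1 with ω
    ring
  rw [integral_add hν_int hweighted_int, hweighted, hsplit, integral_sub hν_int hM]
  ring

end MeasureTheory

/-- Product-error bias decomposition for the MAR-efficient estimator (Theorem 2,
second part): with `D := π(Γ + (1−Γ)H) ≥ ε` and `D̃ := π̃(γ̃ + (1−γ̃)η̃) ≥ ε` a.s.,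
`E[μ̃_MAR + 1{A=a}(R+S)(Y − μ̃_MAR)/D̃] − E[M_MAR] = E[(1 − D/D̃)(μ̃_MAR − M_MAR)]`. -/
theorem product_error_bias_tau_star
    {Ω : Type*} [MeasurableSpace Ω] (P : Measure Ω) [IsProbabilityMeasure P]
    {d : ℕ} (L : Ω → (Fin d → ℝ)) (A R S Y : Ω → ℝ)
    (hL : Measurable L) (hA : Measurable A) (hR : Measurable R)
    (hS : Measurable S) (hY : Integrable Y P)
    (hA01 : ∀ ω, A ω = 0 ∨ A ω = 1)
    (hR01 : ∀ ω, R ω = 0 ∨ R ω = 1)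
    (hS01 : ∀ ω, S ω = 0 ∨ S ω = 1)
    (hSR : ∀ ω, S ω * R ω = 0)
    (a : ℝ) (ha : a = 0 ∨ a = 1)
    (𝓛 : MeasurableSpace Ω) (h𝓛 : 𝓛 = MeasurableSpace.comap L inferInstance)
    (ind : Ω → ℝ) (hind : ind = fun ω => if A ω = a then (1:ℝ) else 0)
    -- arm-a nuisance random variables
    (π Γ H M_MAR : Ω → ℝ)
    (hπ_meas : Measurable[𝓛] π) (hπ_int : Integrable π P)
    (hΓ_meas : Measurable[𝓛] Γ) (hΓ_int : Integrable Γ P)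
    (hH_meas : Measurable[𝓛] H) (hH_int : Integrable H P)
    (hMMAR_meas : Measurable[𝓛] M_MAR) (hMMAR_int : Integrable M_MAR P)
    (hπ01 : ∀ ω, 0 ≤ π ω ∧ π ω ≤ 1)
    (hΓ01 : ∀ ω, 0 ≤ Γ ω ∧ Γ ω ≤ 1)
    (hH01 : ∀ ω, 0 ≤ H ω ∧ H ω ≤ 1)
    -- characterizations
    (hπ : P[ind | 𝓛] =ᵐ[P] π)
    (hΓ : P[fun ω => ind ω * R ω | 𝓛] =ᵐ[P] fun ω => Γ ω * π ω)
    (hH : P[fun ω => ind ω * S ω | 𝓛]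
      =ᵐ[P] fun ω => H ω * (P[fun ω' => ind ω' * (1 - R ω') | 𝓛]) ω)
    (hMMAR : P[fun ω => ind ω * (R ω + S ω) * Y ω | 𝓛]
      =ᵐ[P] fun ω => M_MAR ω * (P[fun ω' => ind ω' * (R ω' + S ω') | 𝓛]) ω)
    -- true and candidate denominators, with positivity
    (ε : ℝ) (hε : 0 < ε)
    (D : Ω → ℝ) (hDdef : D = fun ω => π ω * (Γ ω + (1 - Γ ω) * H ω))
    (hDpos : ∀ᵐ ω ∂P, ε ≤ D ω)
    -- candidate (possibly misspecified) nuisances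
    (πt ηt γt μtM : Ω → ℝ)
    (hπt_meas : Measurable[𝓛] πt) (hηt_meas : Measurable[𝓛] ηt)
    (hγt_meas : Measurable[𝓛] γt) (hμtM_meas : Measurable[𝓛] μtM)
    (hπt_bdd : ∃ B, ∀ ω, |πt ω| ≤ B) (hηt_bdd : ∃ B, ∀ ω, |ηt ω| ≤ B)
    (hμtM_bdd : ∃ B, ∀ ω, |μtM ω| ≤ B)
    (hγt01 : ∀ ω, 0 ≤ γt ω ∧ γt ω ≤ 1)
    (Dt : Ω → ℝ) (hDtdef : Dt = fun ω => πt ω * (γt ω + (1 - γt ω) * ηt ω))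
    (hDtpos : ∀ᵐ ω ∂P, ε ≤ Dt ω) :
    ∫ ω, (μtM ω + ind ω * (R ω + S ω) * (Y ω - μtM ω) / Dt ω) ∂P
      - ∫ ω, M_MAR ω ∂P
    = ∫ ω, (1 - D ω / Dt ω) * (μtM ω - M_MAR ω) ∂P := by
  rename_i mΩ _
  subst hDdef hDtdef
  have hm : 𝓛 ≤ mΩ := h𝓛 ▸ hL.comap_le
  have h01_bdd {f : Ω → ℝ} (hf : ∀ ω, f ω = 0 ∨ f ω = 1) : ∀ᵐ ω ∂P, ‖f ω‖ ≤ 1 :=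
    .of_forall fun ω => by rcases hf ω with h | h <;> simp [h]
  have hind_bdd : ∀ᵐ ω ∂P, ‖ind ω‖ ≤ 1 :=
    h01_bdd fun ω => by simp only [hind]; split_ifs <;> simp
  have hind_meas : Measurable[mΩ] ind :=
    hind ▸ Measurable.ite (hA (measurableSet_singleton a)) measurable_const measurable_const
  have hR_int : Integrable R P := .of_bound hR.aestronglyMeasurable 1 (h01_bdd hR01)
  have hS_int : Integrable S P := .of_bound hS.aestronglyMeasurable 1 (h01_bdd hS01)
  have hG_bdd : ∀ᵐ ω ∂P, ‖ind ω * (R ω + S ω)‖ ≤ 2 := by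
    filter_upwards [hind_bdd, h01_bdd hR01, h01_bdd hS01] with ω hI hRω hSω
    rw [norm_mul]
    nlinarith [norm_nonneg (ind ω), norm_add_le (R ω) (S ω)]
  have hEG := condExp_mul_add_ae_eq (.of_bound hind_meas.aestronglyMeasurable 1 hind_bdd)
    (hR_int.bdd_mul hind_meas.aestronglyMeasurable hind_bdd)
    (hS_int.bdd_mul hind_meas.aestronglyMeasurable hind_bdd) hπ hΓ hH
  have hEGY : P[fun ω => ind ω * (R ω + S ω) * Y ω | 𝓛]
      =ᵐ[P] fun ω => M_MAR ω * (π ω * (Γ ω + (1 - Γ ω) * H ω)) := by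
    filter_upwards [hMMAR, hEG] with ω hMω hGω
    rw [hMω]
    exact congrArg (M_MAR ω * ·) hGω
  obtain ⟨C, hC⟩ := hμtM_bdd
  exact integral_aipw_sub_integral_eq hm hε hμtM_meas (.of_forall hC)
    (hπt_meas.mul (hγt_meas.add ((measurable_const.sub hγt_meas).mul hηt_meas))) hDtpos
    ((hR_int.add hS_int).bdd_mul hind_meas.aestronglyMeasurable hind_bdd)
    (hY.bdd_mul (hind_meas.mul (hR.add hS)).aestronglyMeasurable hG_bdd) hMMAR_int hEG hEGY
end

section
/- Cauchy–Schwarz rate bound underlying Corollary 1 for τ_a*: additionally assume Y ∈ L²(P) and M_MAR, μ̃_MAR ∈ L²(P), and write ‖Z‖₂ := (E[Z²])^{1/2}. Then |E[ μ̃_MAR + 1{A=a}·(R+S)·(Y − μ̃_MAR)/D̃ ] − E[M_MAR]| ≤ ε^{−1}·‖D̃ − D‖₂·‖μ̃_MAR − M_MAR‖₂. -/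
open MeasureTheory

/-- Cauchy–Schwarz rate bound underlying Corollary 1 for `τ_a*`: with `Y`, `M_MAR`,
`μ̃_MAR` in `L²(P)`,
`|E[μ̃_MAR + 1{A=a}(R+S)(Y − μ̃_MAR)/D̃] − E[M_MAR]| ≤ ε⁻¹·‖D̃ − D‖₂·‖μ̃_MAR − M_MAR‖₂`. -/
theorem cauchy_schwarz_bound_tau_star
    {Ω : Type*} [MeasurableSpace Ω] (P : Measure Ω) [IsProbabilityMeasure P]
    {d : ℕ} (L : Ω → (Fin d → ℝ)) (A R S Y : Ω → ℝ)
    (hL : Measurable L) (hA : Measurable A) (hR : Measurable R)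
    (hS : Measurable S) (hY : Integrable Y P)
    (hA01 : ∀ ω, A ω = 0 ∨ A ω = 1)
    (hR01 : ∀ ω, R ω = 0 ∨ R ω = 1)
    (hS01 : ∀ ω, S ω = 0 ∨ S ω = 1)
    (hSR : ∀ ω, S ω * R ω = 0)
    (a : ℝ) (ha : a = 0 ∨ a = 1)
    (𝓛 : MeasurableSpace Ω) (h𝓛 : 𝓛 = MeasurableSpace.comap L inferInstance)
    (ind : Ω → ℝ) (hind : ind = fun ω => if A ω = a then (1:ℝ) else 0)
    -- arm-a nuisance random variables
    (π Γ H M_MAR : Ω → ℝ)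
    (hπ_meas : Measurable[𝓛] π) (hπ_int : Integrable π P)
    (hΓ_meas : Measurable[𝓛] Γ) (hΓ_int : Integrable Γ P)
    (hH_meas : Measurable[𝓛] H) (hH_int : Integrable H P)
    (hMMAR_meas : Measurable[𝓛] M_MAR) (hMMAR_int : Integrable M_MAR P)
    (hπ01 : ∀ ω, 0 ≤ π ω ∧ π ω ≤ 1)
    (hΓ01 : ∀ ω, 0 ≤ Γ ω ∧ Γ ω ≤ 1)
    (hH01 : ∀ ω, 0 ≤ H ω ∧ H ω ≤ 1)
    -- characterizations
    (hπ : P[ind | 𝓛] =ᵐ[P] π)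
    (hΓ : P[fun ω => ind ω * R ω | 𝓛] =ᵐ[P] fun ω => Γ ω * π ω)
    (hH : P[fun ω => ind ω * S ω | 𝓛]
      =ᵐ[P] fun ω => H ω * (P[fun ω' => ind ω' * (1 - R ω') | 𝓛]) ω)
    (hMMAR : P[fun ω => ind ω * (R ω + S ω) * Y ω | 𝓛]
      =ᵐ[P] fun ω => M_MAR ω * (P[fun ω' => ind ω' * (R ω' + S ω') | 𝓛]) ω)
    -- true and candidate denominators, with positivity
    (ε : ℝ) (hε : 0 < ε)
    (D : Ω → ℝ) (hDdef : D = fun ω => π ω * (Γ ω + (1 - Γ ω) * H ω))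
    (hDpos : ∀ᵐ ω ∂P, ε ≤ D ω)
    -- candidate (possibly misspecified) nuisances
    (πt ηt γt μtM : Ω → ℝ)
    (hπt_meas : Measurable[𝓛] πt) (hηt_meas : Measurable[𝓛] ηt)
    (hγt_meas : Measurable[𝓛] γt) (hμtM_meas : Measurable[𝓛] μtM)
    (hπt_bdd : ∃ B, ∀ ω, |πt ω| ≤ B) (hηt_bdd : ∃ B, ∀ ω, |ηt ω| ≤ B)
    (hμtM_bdd : ∃ B, ∀ ω, |μtM ω| ≤ B)
    (hγt01 : ∀ ω, 0 ≤ γt ω ∧ γt ω ≤ 1)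
    (Dt : Ω → ℝ) (hDtdef : Dt = fun ω => πt ω * (γt ω + (1 - γt ω) * ηt ω))
    (hDtpos : ∀ᵐ ω ∂P, ε ≤ Dt ω)
    -- square integrability
    (hY2 : MemLp Y 2 P) (hMMAR2 : MemLp M_MAR 2 P) (hμtM2 : MemLp μtM 2 P) :
    |∫ ω, (μtM ω + ind ω * (R ω + S ω) * (Y ω - μtM ω) / Dt ω) ∂P
        - ∫ ω, M_MAR ω ∂P|
      ≤ ε⁻¹ * Real.sqrt (∫ ω, (Dt ω - D ω) ^ 2 ∂P)
          * Real.sqrt (∫ ω, (μtM ω - M_MAR ω) ^ 2 ∂P) := by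
  classical
  rename_i m0 _hPP
  have hm : 𝓛 ≤ m0 := by
    rw [h𝓛]; exact hL.comap_le
  haveI hfin : IsFiniteMeasure (P.trim hm) :=
    ⟨by rw [trim_measurableSet_eq hm MeasurableSet.univ]; exact measure_lt_top P _⟩
  haveI : SigmaFinite (P.trim hm) := inferInstance
  -- basic measurability
  have hind_meas : Measurable[m0] ind := by
    rw [hind]
    exact Measurable.ite (hA (measurableSet_singleton a)) measurable_const measurable_const
  have hind01 : ∀ ω, ind ω = 0 ∨ ind ω = 1 := by
    intro ω; rw [hind]; dsimp only; split
    · exact Or.inr rfl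
    · exact Or.inl rfl
  have habs01 : ∀ {x : ℝ}, (x = 0 ∨ x = 1) → |x| ≤ 1 := by
    rintro x (rfl | rfl) <;> norm_num
  -- bounded + a.e. strongly measurable → integrable
  have bddInt : ∀ (f : Ω → ℝ), AEStronglyMeasurable[m0] f P → ∀ C : ℝ,
      (∀ ω, |f ω| ≤ C) → Integrable f P := fun f hf C h =>
    (integrable_const C).mono' hf (Filter.Eventually.of_forall fun ω => by
      simpa [Real.norm_eq_abs] using h ω)
  have hiR_meas : Measurable[m0] fun ω => ind ω * R ω := hind_meas.mul hR
  have hiS_meas : Measurable[m0] fun ω => ind ω * S ω := hind_meas.mul hS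
  have hiRS_meas : Measurable[m0] fun ω => ind ω * (R ω + S ω) := hind_meas.mul (hR.add hS)
  have hint_ind : Integrable ind P :=
    bddInt _ hind_meas.aestronglyMeasurable 1 fun ω => habs01 (hind01 ω)
  have hint_iR : Integrable (fun ω => ind ω * R ω) P :=
    bddInt _ hiR_meas.aestronglyMeasurable 1 fun ω => by
      rw [abs_mul]
      exact mul_le_one₀ (habs01 (hind01 ω)) (abs_nonneg _) (habs01 (hR01 ω))
  have hint_iS : Integrable (fun ω => ind ω * S ω) P :=
    bddInt _ hiS_meas.aestronglyMeasurable 1 fun ω => by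
      rw [abs_mul]
      exact mul_le_one₀ (habs01 (hind01 ω)) (abs_nonneg _) (habs01 (hS01 ω))
  have hint_iRS : Integrable (fun ω => ind ω * (R ω + S ω)) P :=
    bddInt _ hiRS_meas.aestronglyMeasurable 2 fun ω => by
      rw [abs_mul]
      calc |ind ω| * |R ω + S ω| ≤ 1 * (|R ω| + |S ω|) :=
            mul_le_mul (habs01 (hind01 ω)) (abs_add_le _ _) (abs_nonneg _) zero_le_one
        _ ≤ 1 * (1 + 1) := by
            have := habs01 (hR01 ω); have := habs01 (hS01 ω)
            nlinarith
        _ = 2 := by norm_num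
  -- E[ind(1-R) | 𝓛] = π - Γπ
  have h1R : P[fun ω => ind ω * (1 - R ω) | 𝓛] =ᵐ[P] fun ω => π ω - Γ ω * π ω := by
    have he : (fun ω => ind ω * (1 - R ω)) = ind - fun ω => ind ω * R ω := by
      funext ω; simp [Pi.sub_apply]; ring
    rw [he]
    refine (condExp_sub hint_ind hint_iR 𝓛).trans ?_
    filter_upwards [hπ, hΓ] with ω h1 h2
    simp only [Pi.sub_apply, h1, h2]
  -- E[ind(R+S) | 𝓛] = D
  have hD1 : P[fun ω => ind ω * (R ω + S ω) | 𝓛] =ᵐ[P] D := by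
    have he : (fun ω => ind ω * (R ω + S ω))
        = (fun ω => ind ω * R ω) + fun ω => ind ω * S ω := by
      funext ω; simp [Pi.add_apply]; ring
    rw [he]
    refine (condExp_add hint_iR hint_iS 𝓛).trans ?_
    filter_upwards [hΓ, hH, h1R] with ω h2 h3 h4
    simp only [Pi.add_apply, h2, h3, h4, hDdef]
    ring
  -- E[ind(R+S)Y | 𝓛] = M D
  have hDY : P[fun ω => ind ω * (R ω + S ω) * Y ω | 𝓛]
      =ᵐ[P] fun ω => M_MAR ω * D ω := by
    refine hMMAR.trans ?_
    filter_upwards [hD1] with ω h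
    rw [h]
  -- bound for μtM
  obtain ⟨Bμ, hBμ⟩ := hμtM_bdd
  have hμtM_int : Integrable μtM P :=
    bddInt _ ((hμtM_meas.mono hm le_rfl).aestronglyMeasurable) Bμ hBμ
  -- E[μtM · ind(R+S) | 𝓛] = μtM D
  have hDμ : P[fun ω => μtM ω * (ind ω * (R ω + S ω)) | 𝓛]
      =ᵐ[P] fun ω => μtM ω * D ω := by
    have h := condExp_stronglyMeasurable_mul_of_bound hm
      hμtM_meas.stronglyMeasurable hint_iRS Bμ
      (Filter.Eventually.of_forall fun ω => by simpa [Real.norm_eq_abs] using hBμ ω)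
    refine h.trans ?_
    filter_upwards [hD1] with ω hω
    simp only [Pi.mul_apply, hω]
  -- E[X | 𝓛] = (M - μtM) D where X = ind(R+S)(Y - μtM)
  have hint_iRSY : Integrable (fun ω => ind ω * (R ω + S ω) * Y ω) P := by
    refine (hY.abs.const_mul 2).mono'
      ((hiRS_meas.aestronglyMeasurable).mul hY.1) ?_
    filter_upwards with ω
    rw [Real.norm_eq_abs, abs_mul]
    have h1 : |ind ω * (R ω + S ω)| ≤ 2 := by
      rw [abs_mul]
      have := habs01 (hind01 ω); have := habs01 (hR01 ω); have := habs01 (hS01 ω)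
      have := abs_add_le (R ω) (S ω)
      nlinarith [abs_nonneg (ind ω), abs_nonneg (R ω + S ω)]
    exact mul_le_mul_of_nonneg_right h1 (abs_nonneg _)
  have hint_μiRS : Integrable (fun ω => μtM ω * (ind ω * (R ω + S ω))) P :=
    bddInt _ (((hμtM_meas.mono hm le_rfl).mul hiRS_meas).aestronglyMeasurable)
      (|Bμ| * 2) fun ω => by
        rw [abs_mul]
        have h1 : |ind ω * (R ω + S ω)| ≤ 2 := by
          rw [abs_mul]
          have := habs01 (hind01 ω); have := habs01 (hR01 ω); have := habs01 (hS01 ω)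
          have := abs_add_le (R ω) (S ω)
          nlinarith [abs_nonneg (ind ω), abs_nonneg (R ω + S ω)]
        have h2 : |μtM ω| ≤ |Bμ| := (hBμ ω).trans (le_abs_self _)
        exact mul_le_mul h2 h1 (abs_nonneg _) (abs_nonneg _)
  have hEX : P[fun ω => ind ω * (R ω + S ω) * (Y ω - μtM ω) | 𝓛]
      =ᵐ[P] fun ω => (M_MAR ω - μtM ω) * D ω := by
    have he : (fun ω => ind ω * (R ω + S ω) * (Y ω - μtM ω))
        = (fun ω => ind ω * (R ω + S ω) * Y ω)
          - fun ω => μtM ω * (ind ω * (R ω + S ω)) := by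
      funext ω; simp [Pi.sub_apply]; ring
    rw [he]
    refine (condExp_sub hint_iRSY hint_μiRS 𝓛).trans ?_
    filter_upwards [hDY, hDμ] with ω h1 h2
    simp only [Pi.sub_apply, h1, h2]
    ring
  -- measurability of Dt and its inverse
  have hDt_meas𝓛 : Measurable[𝓛] Dt := by
    rw [hDtdef]
    exact hπt_meas.mul
      (hγt_meas.add ((measurable_const.sub hγt_meas).mul hηt_meas))
  have hDtinv_meas𝓛 : Measurable[𝓛] fun ω => (Dt ω)⁻¹ := hDt_meas𝓛.inv
  have hDt_meas : Measurable[m0] Dt := hDt_meas𝓛.mono hm le_rfl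
  have hc_bound : ∀ᵐ ω ∂P, ‖(Dt ω)⁻¹‖ ≤ ε⁻¹ := by
    filter_upwards [hDtpos] with ω h
    rw [Real.norm_eq_abs, abs_of_pos (inv_pos.mpr (hε.trans_le h))]
    exact inv_anti₀ hε h
  -- integrability of c * X
  have hX_int : Integrable (fun ω => ind ω * (R ω + S ω) * (Y ω - μtM ω)) P := by
    have he : (fun ω => ind ω * (R ω + S ω) * (Y ω - μtM ω))
        = (fun ω => ind ω * (R ω + S ω) * Y ω)
          - fun ω => μtM ω * (ind ω * (R ω + S ω)) := by
      funext ω; simp [Pi.sub_apply]; ring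
    rw [he]; exact hint_iRSY.sub hint_μiRS
  have hcX_int : Integrable
      (fun ω => (Dt ω)⁻¹ * (ind ω * (R ω + S ω) * (Y ω - μtM ω))) P := by
    refine (hX_int.abs.const_mul ε⁻¹).mono'
      ((hDt_meas.inv.aestronglyMeasurable).mul hX_int.1) ?_
    filter_upwards [hc_bound] with ω h
    rw [Real.norm_eq_abs, abs_mul]
    refine mul_le_mul_of_nonneg_right ?_ (abs_nonneg _)
    simpa [Real.norm_eq_abs, abs_inv] using h
  -- pull-out
  have hpull : P[fun ω => (Dt ω)⁻¹ * (ind ω * (R ω + S ω) * (Y ω - μtM ω)) | 𝓛]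
      =ᵐ[P] fun ω => (Dt ω)⁻¹ * ((M_MAR ω - μtM ω) * D ω) := by
    have h := condExp_stronglyMeasurable_mul_of_bound hm
      hDtinv_meas𝓛.stronglyMeasurable hX_int ε⁻¹ hc_bound
    refine h.trans ?_
    filter_upwards [hEX] with ω hω
    simp only [Pi.mul_apply, hω]
  -- key integral computation
  have hkey : ∫ ω, ind ω * (R ω + S ω) * (Y ω - μtM ω) / Dt ω ∂P
      = ∫ ω, (Dt ω)⁻¹ * ((M_MAR ω - μtM ω) * D ω) ∂P := by
    have e1 : ∫ ω, ind ω * (R ω + S ω) * (Y ω - μtM ω) / Dt ω ∂P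
        = ∫ ω, (Dt ω)⁻¹ * (ind ω * (R ω + S ω) * (Y ω - μtM ω)) ∂P :=
      integral_congr_ae (Filter.Eventually.of_forall fun ω => by
        dsimp only; rw [div_eq_mul_inv, mul_comm])
    rw [e1, ← integral_condExp hm
      (f := fun ω => (Dt ω)⁻¹ * (ind ω * (R ω + S ω) * (Y ω - μtM ω)))]
    exact integral_congr_ae hpull
  -- integrability of K
  have hD01 : ∀ ω, 0 ≤ D ω ∧ D ω ≤ 1 := by
    intro ω
    obtain ⟨hπ0, hπ1⟩ := hπ01 ω
    obtain ⟨hΓ0, hΓ1⟩ := hΓ01 ω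
    obtain ⟨hH0, hH1⟩ := hH01 ω
    rw [hDdef]
    dsimp only
    have h1 : 0 ≤ (1 - Γ ω) * H ω := mul_nonneg (by linarith) hH0
    have h2 : (1 - Γ ω) * H ω ≤ 1 - Γ ω := by nlinarith
    constructor
    · exact mul_nonneg hπ0 (by linarith)
    · nlinarith
  have hD_meas : Measurable[m0] D := by
    rw [hDdef]
    exact (hπ_meas.mono hm le_rfl).mul
      ((hΓ_meas.mono hm le_rfl).add
        ((measurable_const.sub (hΓ_meas.mono hm le_rfl)).mul (hH_meas.mono hm le_rfl)))
  have hMsubμ_int : Integrable (fun ω => M_MAR ω - μtM ω) P := hMMAR_int.sub hμtM_int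
  have hK_int : Integrable (fun ω => (Dt ω)⁻¹ * ((M_MAR ω - μtM ω) * D ω)) P := by
    refine (hMsubμ_int.abs.const_mul ε⁻¹).mono'
      ((hDt_meas.inv.aestronglyMeasurable).mul
        ((hMsubμ_int.1).mul hD_meas.aestronglyMeasurable)) ?_
    filter_upwards [hc_bound] with ω h
    rw [Real.norm_eq_abs, abs_mul, abs_mul]
    have h1 : |(Dt ω)⁻¹| ≤ ε⁻¹ := by simpa [Real.norm_eq_abs, abs_inv] using h
    have h2 : |D ω| ≤ 1 := by
      obtain ⟨h0, hle⟩ := hD01 ω; rw [abs_of_nonneg h0]; exact hle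
    calc |(Dt ω)⁻¹| * (|M_MAR ω - μtM ω| * |D ω|)
        ≤ ε⁻¹ * (|M_MAR ω - μtM ω| * 1) := by
          refine mul_le_mul h1 ?_ (by positivity) (by positivity)
          exact mul_le_mul_of_nonneg_left h2 (abs_nonneg _)
      _ = ε⁻¹ * |M_MAR ω - μtM ω| := by ring
  have hXdiv_int : Integrable
      (fun ω => ind ω * (R ω + S ω) * (Y ω - μtM ω) / Dt ω) P :=
    hcX_int.congr (Filter.Eventually.of_forall fun ω => by
      dsimp only; rw [div_eq_mul_inv, mul_comm])
  -- split the difference of integrals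
  have hsplit : (∫ ω, (μtM ω + ind ω * (R ω + S ω) * (Y ω - μtM ω) / Dt ω) ∂P)
      - ∫ ω, M_MAR ω ∂P
      = ∫ ω, ((μtM ω - M_MAR ω) + (Dt ω)⁻¹ * ((M_MAR ω - μtM ω) * D ω)) ∂P := by
    have e1 : ∫ ω, ((μtM ω - M_MAR ω) + (Dt ω)⁻¹ * ((M_MAR ω - μtM ω) * D ω)) ∂P
        = (∫ ω, (μtM ω - M_MAR ω) ∂P)
          + ∫ ω, (Dt ω)⁻¹ * ((M_MAR ω - μtM ω) * D ω) ∂P :=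
      integral_add (hμtM_int.sub hMMAR_int) hK_int
    have e2 : ∫ ω, (μtM ω - M_MAR ω) ∂P = (∫ ω, μtM ω ∂P) - ∫ ω, M_MAR ω ∂P :=
      integral_sub hμtM_int hMMAR_int
    rw [integral_add hμtM_int hXdiv_int, hkey, e1, e2]
    ring
  rw [hsplit]
  -- pointwise bound
  have hptw : ∀ᵐ ω ∂P,
      |(μtM ω - M_MAR ω) + (Dt ω)⁻¹ * ((M_MAR ω - μtM ω) * D ω)|
        ≤ ε⁻¹ * (|Dt ω - D ω| * |μtM ω - M_MAR ω|) := by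
    filter_upwards [hDtpos, hc_bound] with ω h hc
    have hDt0 : Dt ω ≠ 0 := (hε.trans_le h).ne'
    have heq : (μtM ω - M_MAR ω) + (Dt ω)⁻¹ * ((M_MAR ω - μtM ω) * D ω)
        = (M_MAR ω - μtM ω) * (D ω - Dt ω) * (Dt ω)⁻¹ := by
      field_simp
      ring
    rw [heq, abs_mul, abs_mul]
    have h1 : |(Dt ω)⁻¹| ≤ ε⁻¹ := by simpa [Real.norm_eq_abs, abs_inv] using hc
    calc |M_MAR ω - μtM ω| * |D ω - Dt ω| * |(Dt ω)⁻¹|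
        ≤ |M_MAR ω - μtM ω| * |D ω - Dt ω| * ε⁻¹ :=
          mul_le_mul_of_nonneg_left h1 (by positivity)
      _ = ε⁻¹ * (|Dt ω - D ω| * |μtM ω - M_MAR ω|) := by
          rw [abs_sub_comm (D ω), abs_sub_comm (M_MAR ω)]; ring
  -- L2 facts
  have hDtD2 : MemLp (fun ω => Dt ω - D ω) 2 P := by
    obtain ⟨Bπt, hBπt⟩ := hπt_bdd
    obtain ⟨Bηt, hBηt⟩ := hηt_bdd
    refine MemLp.mono_exponent
      (memLp_top_of_bound ((hDt_meas.sub hD_meas).aestronglyMeasurable)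
        (|Bπt| * (1 + |Bηt|) + 1) ?_) le_top
    filter_upwards with ω
    rw [Real.norm_eq_abs]
    have h1 : |Dt ω| ≤ |Bπt| * (1 + |Bηt|) := by
      rw [hDtdef]
      obtain ⟨hγ0, hγ1⟩ := hγt01 ω
      rw [abs_mul]
      have h2 : |γt ω + (1 - γt ω) * ηt ω| ≤ 1 + |Bηt| := by
        calc |γt ω + (1 - γt ω) * ηt ω| ≤ |γt ω| + |(1 - γt ω) * ηt ω| := abs_add_le _ _
          _ ≤ 1 + |Bηt| := by
              rw [abs_mul]
              have hη : |ηt ω| ≤ |Bηt| := (hBηt ω).trans (le_abs_self _)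
              have : |1 - γt ω| ≤ 1 := by rw [abs_of_nonneg (by linarith)]; linarith
              have hγa : |γt ω| ≤ 1 := by rw [abs_of_nonneg hγ0]; exact hγ1
              nlinarith [abs_nonneg (ηt ω)]
      have hπa : |πt ω| ≤ |Bπt| := (hBπt ω).trans (le_abs_self _)
      exact mul_le_mul hπa h2 (abs_nonneg _) (abs_nonneg _)
    have h2 : |D ω| ≤ 1 := by
      obtain ⟨h0, hle⟩ := hD01 ω; rw [abs_of_nonneg h0]; exact hle
    calc |Dt ω - D ω| ≤ |Dt ω| + |D ω| := abs_sub _ _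
      _ ≤ |Bπt| * (1 + |Bηt|) + 1 := add_le_add h1 h2
  have hμM2 : MemLp (fun ω => μtM ω - M_MAR ω) 2 P := hμtM2.sub hMMAR2
  -- Cauchy–Schwarz
  have hCS : ∫ ω, |Dt ω - D ω| * |μtM ω - M_MAR ω| ∂P
      ≤ Real.sqrt (∫ ω, (Dt ω - D ω) ^ 2 ∂P)
        * Real.sqrt (∫ ω, (μtM ω - M_MAR ω) ^ 2 ∂P) := by
    have hpq : (2:ℝ).HolderConjugate 2 := Real.HolderConjugate.two_two
    have h2 : ENNReal.ofReal (2:ℝ) = 2 := by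
      rw [ENNReal.ofReal_ofNat]
    have := integral_mul_norm_le_Lp_mul_Lq (μ := P) hpq
      (f := fun ω => Dt ω - D ω) (g := fun ω => μtM ω - M_MAR ω)
      (h2 ▸ hDtD2) (h2 ▸ hμM2)
    have e1 : ∫ ω, ‖Dt ω - D ω‖ * ‖μtM ω - M_MAR ω‖ ∂P
        = ∫ ω, |Dt ω - D ω| * |μtM ω - M_MAR ω| ∂P := by
      simp [Real.norm_eq_abs]
    have e2 : ∫ ω, ‖Dt ω - D ω‖ ^ (2:ℝ) ∂P = ∫ ω, (Dt ω - D ω) ^ 2 ∂P := by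
      refine integral_congr_ae (Filter.Eventually.of_forall fun ω => ?_)
      dsimp only
      rw [Real.norm_eq_abs, show (2:ℝ) = ((2:ℕ):ℝ) by norm_num,
        Real.rpow_natCast, sq_abs]
    have e3 : ∫ ω, ‖μtM ω - M_MAR ω‖ ^ (2:ℝ) ∂P
        = ∫ ω, (μtM ω - M_MAR ω) ^ 2 ∂P := by
      refine integral_congr_ae (Filter.Eventually.of_forall fun ω => ?_)
      dsimp only
      rw [Real.norm_eq_abs, show (2:ℝ) = ((2:ℕ):ℝ) by norm_num,
        Real.rpow_natCast, sq_abs]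
    rw [e1, e2, e3] at this
    calc ∫ ω, |Dt ω - D ω| * |μtM ω - M_MAR ω| ∂P
        ≤ (∫ ω, (Dt ω - D ω) ^ 2 ∂P) ^ ((1:ℝ)/2)
          * (∫ ω, (μtM ω - M_MAR ω) ^ 2 ∂P) ^ ((1:ℝ)/2) := this
      _ = Real.sqrt (∫ ω, (Dt ω - D ω) ^ 2 ∂P)
          * Real.sqrt (∫ ω, (μtM ω - M_MAR ω) ^ 2 ∂P) := by
          rw [Real.sqrt_eq_rpow, Real.sqrt_eq_rpow]
  -- integrability of |Dt-D| * |μtM - M|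
  have habs_int : Integrable (fun ω => |Dt ω - D ω| * |μtM ω - M_MAR ω|) P := by
    have h1 : MemLp (fun ω => |Dt ω - D ω|) 2 P := hDtD2.norm
    have h2 : MemLp (fun ω => |μtM ω - M_MAR ω|) 2 P := hμM2.norm
    have h3 : MemLp ((fun ω => |Dt ω - D ω|) • fun ω => |μtM ω - M_MAR ω|) 1 P :=
      MemLp.smul h2 h1 (hpqr := ⟨by simp [one_div, ENNReal.inv_two_add_inv_two]⟩)
    exact memLp_one_iff_integrable.mp h3
  -- final estimate
  have hh_int : Integrable
      (fun ω => (μtM ω - M_MAR ω) + (Dt ω)⁻¹ * ((M_MAR ω - μtM ω) * D ω)) P :=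
    (hμtM_int.sub hMMAR_int).add hK_int
  calc |∫ ω, ((μtM ω - M_MAR ω) + (Dt ω)⁻¹ * ((M_MAR ω - μtM ω) * D ω)) ∂P|
      ≤ ∫ ω, |(μtM ω - M_MAR ω) + (Dt ω)⁻¹ * ((M_MAR ω - μtM ω) * D ω)| ∂P := by
        simpa [Real.norm_eq_abs] using
          norm_integral_le_integral_norm
            (fun ω => (μtM ω - M_MAR ω) + (Dt ω)⁻¹ * ((M_MAR ω - μtM ω) * D ω)) (μ := P)
    _ ≤ ∫ ω, ε⁻¹ * (|Dt ω - D ω| * |μtM ω - M_MAR ω|) ∂P := by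
        refine integral_mono_ae hh_int.abs (habs_int.const_mul ε⁻¹) hptw
    _ = ε⁻¹ * ∫ ω, |Dt ω - D ω| * |μtM ω - M_MAR ω| ∂P := integral_const_mul _ _
    _ ≤ ε⁻¹ * (Real.sqrt (∫ ω, (Dt ω - D ω) ^ 2 ∂P)
          * Real.sqrt (∫ ω, (μtM ω - M_MAR ω) ^ 2 ∂P)) :=
        mul_le_mul_of_nonneg_left hCS (by positivity)
    _ = ε⁻¹ * Real.sqrt (∫ ω, (Dt ω - D ω) ^ 2 ∂P)
          * Real.sqrt (∫ ω, (μtM ω - M_MAR ω) ^ 2 ∂P) := by ring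
end

section
/- Crux identification lemma for the second-stage outcome regression: under Assumptions NI and POS, E[1{A=a}·(1−R)·Y | 𝓛] = M_S·E[1{A=a}·(1−R) | 𝓛] almost everywhere; that is, among subjects whose outcome is initially missing, the conditional mean of Y given (L, A = a) coincides with the double-sample outcome regression μ_{a,S}(L) = E(Y | L, A = a, S = 1). -/
/-!
On the event `E = {A = a, R = 0}` a `σ(L, A, R)`-measurable function depends on `L` alone
(Doob–Dynkin), so `𝔼[S | L, A, R]` agrees on `E` with an `L`-measurable `ψ`, which POS lets us
take `≥ ε`. Since `S R = 0`, `1{A=a} S = 1_E S`; the tower property and NI then give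
`𝔼[1_E S | L] = ψ 𝔼[1_E | L]` and `𝔼[1_E S Y | L] = ψ 𝔼[1_E Y | L]`. Comparing these with the
defining identities of `H` and `M_S` yields `ψ 𝔼[1_E Y | L] = ψ M_S 𝔼[1_E | L]`, and `ψ ≥ ε > 0`
cancels.
-/

open MeasureTheory

theorem exists_measurable_comap_fst_eq_of_snd_eq {Ω β γ : Type*} [MeasurableSpace β]
    [MeasurableSpace γ] {X : Ω → β} {Z : Ω → γ} {g : Ω → ℝ}
    (hg : Measurable[MeasurableSpace.comap (fun ω => (X ω, Z ω)) inferInstance] g) (z : γ)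
    {lo hi : ℝ} (hlohi : lo ≤ hi) :
    ∃ ψ : Ω → ℝ, Measurable[MeasurableSpace.comap X inferInstance] ψ ∧
      (∀ ω, ψ ω ∈ Set.Icc lo hi) ∧ ∀ ω, Z ω = z → g ω ∈ Set.Icc lo hi → ψ ω = g ω := by
  obtain ⟨φ, hφ, rfl⟩ := hg.exists_eq_measurable_comp
  have hφX : Measurable[MeasurableSpace.comap X inferInstance] fun ω => φ (X ω, z) :=
    hφ.comp ((comap_measurable X).prodMk measurable_const)
  refine ⟨fun ω => max lo (min (φ (X ω, z)) hi), measurable_const.max (hφX.min measurable_const),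
    fun ω => ⟨le_max_left _ _, max_le hlohi (min_le_right _ _)⟩, ?_⟩
  rintro ω hz ⟨hlo, hhi⟩
  simp only [Function.comp_apply, hz] at hlo hhi ⊢
  rw [min_eq_left hhi, max_eq_right hlo]

section Selection

variable {Ω : Type*} {m m₁ m₀ : MeasurableSpace Ω} {μ : Measure[m₀] Ω} [IsFiniteMeasure μ]
  {E : Set Ω}

theorem condExp_indicator_ae_eq_condExp_indicator_condExp (hm : m ≤ m₁) (hm₁ : m₁ ≤ m₀)
    (hE : MeasurableSet[m₁] E) {V : Ω → ℝ} (hV : Integrable V μ) :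
    μ[E.indicator V | m] =ᵐ[μ] μ[E.indicator μ[V | m₁] | m] :=
  (condExp_condExp_of_le hm hm₁).symm.trans (condExp_congr_ae (condExp_indicator hV hE))

theorem condExp_indicator_ae_eq_mul_of_indicator_condExp_ae_eq (hm : m ≤ m₁) (hm₁ : m₁ ≤ m₀)
    (hE : MeasurableSet[m₁] E) {ψ V X : Ω → ℝ} (hψ : StronglyMeasurable[m] ψ) {c : ℝ}
    (hψc : ∀ᵐ ω ∂μ, ‖ψ ω‖ ≤ c) (hV : Integrable V μ) (hX : Integrable X μ)
    (h : E.indicator μ[V | m₁] =ᵐ[μ] ψ * E.indicator μ[X | m₁]) :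
    μ[E.indicator V | m] =ᵐ[μ] ψ * μ[E.indicator X | m] := by
  have hEX : Integrable (E.indicator μ[X | m₁]) μ := integrable_condExp.indicator (hm₁ _ hE)
  calc μ[E.indicator V | m]
      =ᵐ[μ] μ[E.indicator μ[V | m₁] | m] :=
        condExp_indicator_ae_eq_condExp_indicator_condExp hm hm₁ hE hV
    _ =ᵐ[μ] μ[ψ * E.indicator μ[X | m₁] | m] := condExp_congr_ae h
    _ =ᵐ[μ] ψ * μ[E.indicator μ[X | m₁] | m] :=
      condExp_stronglyMeasurable_mul_of_bound (hm.trans hm₁) hψ hEX c hψc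
    _ =ᵐ[μ] ψ * μ[E.indicator X | m] :=
      (condExp_indicator_ae_eq_condExp_indicator_condExp hm hm₁ hE hX).symm.mul_left

theorem condExp_indicator_ae_eq_mul_of_selection (hm : m ≤ m₁) (hm₁ : m₁ ≤ m₀)
    (hE : MeasurableSet[m₁] E) {ψ S Y H M : Ω → ℝ} (hψ : StronglyMeasurable[m] ψ) {ε c : ℝ}
    (hε : 0 < ε) (hψ_mem : ∀ ω, ψ ω ∈ Set.Icc ε c)
    (hS : Integrable S μ) (hY : Integrable Y μ) (hSY : Integrable (S * Y) μ)
    (hsel : ∀ᵐ ω ∂μ, ω ∈ E → μ[S | m₁] ω = ψ ω)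
    (hNI : ∀ᵐ ω ∂μ, ω ∈ E → μ[S * Y | m₁] ω = μ[S | m₁] ω * μ[Y | m₁] ω)
    (hH : μ[E.indicator S | m] =ᵐ[μ] H * μ[E.indicator 1 | m])
    (hM : μ[E.indicator (S * Y) | m] =ᵐ[μ] M * (H * μ[E.indicator 1 | m])) :
    μ[E.indicator Y | m] =ᵐ[μ] M * μ[E.indicator 1 | m] := by
  have hψc : ∀ᵐ ω ∂μ, ‖ψ ω‖ ≤ c := ae_of_all _ fun ω => by
    rw [Real.norm_eq_abs, abs_of_pos (hε.trans_le (hψ_mem ω).1)]; exact (hψ_mem ω).2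
  have hS_sel : μ[E.indicator S | m] =ᵐ[μ] ψ * μ[E.indicator 1 | m] := by
    refine condExp_indicator_ae_eq_mul_of_indicator_condExp_ae_eq hm hm₁ hE hψ hψc hS
      (integrable_const 1) ?_
    rw [show μ[(1 : Ω → ℝ) | m₁] = 1 from condExp_const hm₁ (1 : ℝ)]
    filter_upwards [hsel] with ω hω
    by_cases hωE : ω ∈ E <;> simp [hωE, hω]
  have hSY_sel : μ[E.indicator (S * Y) | m] =ᵐ[μ] ψ * μ[E.indicator Y | m] := by
    refine condExp_indicator_ae_eq_mul_of_indicator_condExp_ae_eq hm hm₁ hE hψ hψc hSY hY ?_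
    filter_upwards [hsel, hNI] with ω hselω hNIω
    by_cases hωE : ω ∈ E <;> simp [hωE, hselω, hNIω]
  filter_upwards [hS_sel, hSY_sel, hH, hM] with ω hSω hSYω hHω hMω
  simp only [Pi.mul_apply] at hSω hSYω hHω hMω ⊢
  refine mul_left_cancel₀ (hε.trans_le (hψ_mem ω).1).ne' ?_
  linear_combination hMω - hSYω + M ω * hSω - M ω * hHω

theorem condExp_indicator_preimage_ae_eq_mul_of_selection {β γ : Type*} [MeasurableSpace β]
    [MeasurableSpace γ] [MeasurableSingletonClass γ] {X : Ω → β} {Z : Ω → γ}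
    (hX : Measurable X) (hZ : Measurable Z) (z : γ) {S Y H M : Ω → ℝ} (hS : Measurable S)
    (hS_bound : ∀ᵐ ω ∂μ, |S ω| ≤ 1) (hY : Integrable Y μ) {ε : ℝ} (hε : 0 < ε)
    (hPOS : ∀ᵐ ω ∂μ, Z ω = z →
      ε ≤ μ[S | MeasurableSpace.comap (fun ω => (X ω, Z ω)) inferInstance] ω)
    (hNI : ∀ᵐ ω ∂μ, Z ω = z →
      μ[S * Y | MeasurableSpace.comap (fun ω => (X ω, Z ω)) inferInstance] ω
        = μ[S | MeasurableSpace.comap (fun ω => (X ω, Z ω)) inferInstance] ω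
          * μ[Y | MeasurableSpace.comap (fun ω => (X ω, Z ω)) inferInstance] ω)
    (hH : μ[(Z ⁻¹' {z}).indicator S | MeasurableSpace.comap X inferInstance]
      =ᵐ[μ] H * μ[(Z ⁻¹' {z}).indicator 1 | MeasurableSpace.comap X inferInstance])
    (hM : μ[(Z ⁻¹' {z}).indicator (S * Y) | MeasurableSpace.comap X inferInstance]
      =ᵐ[μ] M * (H * μ[(Z ⁻¹' {z}).indicator 1 | MeasurableSpace.comap X inferInstance])) :
    μ[(Z ⁻¹' {z}).indicator Y | MeasurableSpace.comap X inferInstance]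
      =ᵐ[μ] M * μ[(Z ⁻¹' {z}).indicator 1 | MeasurableSpace.comap X inferInstance] := by
  have hXZ : Measurable[MeasurableSpace.comap (fun ω => (X ω, Z ω)) inferInstance]
      fun ω => (X ω, Z ω) := comap_measurable _
  obtain ⟨ψ, hψ_meas, hψ_mem, hψ_eq⟩ := exists_measurable_comap_fst_eq_of_snd_eq
    stronglyMeasurable_condExp.measurable z (le_max_left ε 1)
    (g := μ[S | MeasurableSpace.comap (fun ω => (X ω, Z ω)) inferInstance])
  refine condExp_indicator_ae_eq_mul_of_selection (measurable_fst.comp hXZ).comap_le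
    (hX.prodMk hZ).comap_le (measurable_snd.comp hXZ (measurableSet_singleton z))
    hψ_meas.stronglyMeasurable hε hψ_mem (.of_bound hS.aestronglyMeasurable 1 hS_bound) hY
    (hY.bdd_mul hS.aestronglyMeasurable hS_bound) ?_ hNI hH hM
  filter_upwards [hPOS, ae_bdd_abs_condExp_of_ae_bdd_abs hS_bound] with ω hpos hle hz
  exact (hψ_eq ω hz ⟨hpos hz, (abs_le.1 hle).2.trans (le_max_right _ _)⟩).symm

end Selection

theorem ite_mul_one_sub_mul_eq_indicator {Ω : Type*} {A R : Ω → ℝ}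
    (hR01 : ∀ ω, R ω = 0 ∨ R ω = 1) (a : ℝ) (f : Ω → ℝ) :
    (fun ω => (if A ω = a then 1 else 0) * (1 - R ω) * f ω)
      = ((fun ω => (A ω, R ω)) ⁻¹' {(a, 0)}).indicator f :=
  funext fun ω => by
    by_cases hAa : A ω = a <;> rcases hR01 ω with hR | hR <;> simp [hAa, hR]

/-- Crux identification lemma for the second-stage outcome regression: under
Assumptions NI and POS, `E[1{A=a}(1−R)·Y | 𝓛] = M_S · E[1{A=a}(1−R) | 𝓛]` a.e.;
i.e., among subjects with initially missing outcomes, the conditional mean of `Y`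
given `(L, A = a)` coincides with `μ_{a,S}(L)`. -/
theorem second_stage_outcome_regression_identification
    {Ω : Type*} [MeasurableSpace Ω] (P : Measure Ω) [IsProbabilityMeasure P]
    {d : ℕ} (L : Ω → (Fin d → ℝ)) (A R S Y : Ω → ℝ)
    (hL : Measurable L) (hA : Measurable A) (hR : Measurable R)
    (hS : Measurable S) (hY : Integrable Y P)
    (hA01 : ∀ ω, A ω = 0 ∨ A ω = 1)
    (hR01 : ∀ ω, R ω = 0 ∨ R ω = 1)
    (hS01 : ∀ ω, S ω = 0 ∨ S ω = 1)
    (hSR : ∀ ω, S ω * R ω = 0)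
    (a : ℝ) (ha : a = 0 ∨ a = 1)
    (𝓛 : MeasurableSpace Ω) (h𝓛 : 𝓛 = MeasurableSpace.comap L inferInstance)
    (𝓖R : MeasurableSpace Ω)
    (h𝓖R : 𝓖R = MeasurableSpace.comap (fun ω => (L ω, A ω, R ω)) inferInstance)
    (ind : Ω → ℝ) (hind : ind = fun ω => if A ω = a then (1:ℝ) else 0)
    -- arm-a nuisance random variables
    (π Γ H M_S : Ω → ℝ)
    (hπ_meas : Measurable[𝓛] π) (hπ_int : Integrable π P)
    (hΓ_meas : Measurable[𝓛] Γ) (hΓ_int : Integrable Γ P)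
    (hH_meas : Measurable[𝓛] H) (hH_int : Integrable H P)
    (hMS_meas : Measurable[𝓛] M_S) (hMS_int : Integrable M_S P)
    (hπ01 : ∀ ω, 0 ≤ π ω ∧ π ω ≤ 1)
    (hΓ01 : ∀ ω, 0 ≤ Γ ω ∧ Γ ω ≤ 1)
    (hH01 : ∀ ω, 0 ≤ H ω ∧ H ω ≤ 1)
    -- characterizations
    (hπ : P[ind | 𝓛] =ᵐ[P] π)
    (hΓ : P[fun ω => ind ω * R ω | 𝓛] =ᵐ[P] fun ω => Γ ω * π ω)
    (hH : P[fun ω => ind ω * S ω | 𝓛]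
      =ᵐ[P] fun ω => H ω * (P[fun ω' => ind ω' * (1 - R ω') | 𝓛]) ω)
    (hMS : P[fun ω => ind ω * S ω * Y ω | 𝓛]
      =ᵐ[P] fun ω => M_S ω * (H ω * ((1 - Γ ω) * π ω)))
    -- Assumption NI
    (hNI : ∀ f : ℝ → ℝ, Measurable f → (∃ B, ∀ x, |f x| ≤ B) →
      ∀ᵐ ω ∂P, R ω = 0 →
        (P[fun ω' => S ω' * f (Y ω') | 𝓖R]) ω
          = (P[S | 𝓖R]) ω * (P[fun ω' => f (Y ω') | 𝓖R]) ω)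
    (hNIid : ∀ᵐ ω ∂P, R ω = 0 →
      (P[fun ω' => S ω' * Y ω' | 𝓖R]) ω = (P[S | 𝓖R]) ω * (P[Y | 𝓖R]) ω)
    -- Assumption POS
    (ε : ℝ) (hε : 0 < ε)
    (hPOS : ∀ᵐ ω ∂P, R ω = 0 → ε ≤ (P[S | 𝓖R]) ω) :
    P[fun ω => ind ω * (1 - R ω) * Y ω | 𝓛]
      =ᵐ[P] fun ω => M_S ω * (P[fun ω' => ind ω' * (1 - R ω') | 𝓛]) ω := by
  subst h𝓛 h𝓖R
  set E : Set Ω := (fun ω => (A ω, R ω)) ⁻¹' {(a, 0)}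
  have hE : ∀ f : Ω → ℝ, (fun ω => ind ω * (1 - R ω) * f ω) = E.indicator f := fun f => by
    rw [hind]; exact ite_mul_one_sub_mul_eq_indicator hR01 a f
  have hE_one : (fun ω => ind ω * (1 - R ω)) = E.indicator 1 := by simpa using hE 1
  have hE_S : (fun ω => ind ω * S ω) = E.indicator S := by
    rw [← hE]; funext ω; linear_combination ind ω * hSR ω
  have hE_SY : (fun ω => ind ω * S ω * Y ω) = E.indicator (S * Y) := by
    rw [← hE]; funext ω; simp only [Pi.mul_apply]; linear_combination ind ω * Y ω * hSR ω
  have hp : P[E.indicator 1 | MeasurableSpace.comap L inferInstance]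
      =ᵐ[P] fun ω => (1 - Γ ω) * π ω := by
    have hind_int : Integrable ind P :=
      .of_bound (hind ▸ Measurable.ite (hA (measurableSet_singleton a)) measurable_const
        measurable_const).aestronglyMeasurable 1
        (ae_of_all _ fun ω => by by_cases h : A ω = a <;> simp [hind, h])
    have hindR_int : Integrable (fun ω => ind ω * R ω) P := hind_int.mul_bdd hR.aestronglyMeasurable
      (c := 1) (ae_of_all _ fun ω => by rcases hR01 ω with h | h <;> simp [h])
    rw [← hE_one, show (fun ω => ind ω * (1 - R ω)) = ind - fun ω => ind ω * R ω from
      funext fun ω => by simp only [Pi.sub_apply]; ring]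
    filter_upwards [condExp_sub hind_int hindR_int _, hπ, hΓ] with ω h hπω hΓω
    rw [h, Pi.sub_apply, hπω, hΓω]; ring
  rw [hE_S, hE_one] at hH
  rw [hE_SY] at hMS
  rw [hE Y, hE_one]
  refine condExp_indicator_preimage_ae_eq_mul_of_selection hL (hA.prodMk hR) (a, 0) hS
    (ae_of_all _ fun ω => by rcases hS01 ω with h | h <;> simp [h]) hY hε
    (by filter_upwards [hPOS] with ω h hz using h (congrArg Prod.snd hz))
    (by filter_upwards [hNIid] with ω h hz using h (congrArg Prod.snd hz)) hH
    (hMS.trans ?_)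
  filter_upwards [hp] with ω h
  exact congrArg (fun t => M_S ω * (H ω * t)) h.symm
end
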